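/- arXiv:2401.14821 — 6 statements merged into one kernel-verified Lean document; each statement's English description precedes it below -/
import Mathlib

section
/- For 1<q<p, fix f,A,F>0 with f^q < A < f^{(p-q)/(p-1)} F^{(q-1)/(p-1)}. The function g(κ) = κ^{q-1} H_q(ω_p(f^p/(κ^{p-1}F))) is strictly increasing on [(f^p/F)^{1/(p-1)}, 1], with derivative g'(κ) = ((q-1)(p-q)/p) κ^{q-2} ω_p(f^p/(κ^{p-1}F))^q > 0. -/
/-!
The constraint `κ ≥ (f^p/F)^(1/(p-1))` says exactly that `s(κ) = f^p/(κ^(p-1) F) ≤ 1`, so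
`w = ω_p(s(κ))` is defined. As the inverse of the continuous injective map `H_p` on the compact
interval `[1, p/(p-1)]`, `ω_p` is continuous; since `H_p'(z) = p(p-1) z^(p-2) (1-z)` vanishes
only at `z = 1 = ω_p(1)`, it is differentiable on `(0, 1)` by the inverse function theorem. With
`s' = -(p-1) s/κ` and `s = H_p(w) = w^(p-1) (p - (p-1) w)`, the chain rule gives
`g' = (q-1) κ^(q-2) w^(q-1) [(q - (q-1) w) - q (p - (p-1) w)/p] = ((q-1)(p-q)/p) κ^(q-2) w^q > 0`.
-/

open Real Set Topology

theorem IsCompact.continuousOn_of_rightInvOn {X Y : Type*} [TopologicalSpace X]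
    [TopologicalSpace Y] [T2Space Y] {f : X → Y} {g : Y → X} {K : Set X} {t : Set Y}
    (hK : IsCompact K) (hf : ContinuousOn f K) (hinj : InjOn f K) (hg : MapsTo g t K)
    (hfg : RightInvOn g f t) : ContinuousOn g t := by
  have : CompactSpace K := isCompact_iff_compactSpace.mp hK
  have hemb : IsClosedEmbedding (K.domRestrict f) :=
    hf.domRestrict.isClosedEmbedding hinj.injective
  have hrestrict : Continuous (hg.restrict g t K) :=
    hemb.continuous_iff.mpr (continuous_subtype_val.congr fun y => (hfg y.2).symm)
  exact continuousOn_iff_continuous_domRestrict.mpr (continuous_subtype_val.comp hrestrict)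

noncomputable def H (p z : ℝ) : ℝ := p * z ^ (p - 1) - (p - 1) * z ^ p

section H

variable {p : ℝ}

theorem H_one : H p 1 = 1 := by simp [H]

theorem hasDerivAt_H {w : ℝ} (hw : 0 < w) :
    HasDerivAt (H p) (p * (p - 1) * w ^ (p - 2) * (1 - w)) w := by
  have hd := ((hasDerivAt_rpow_const (p := p - 1) (Or.inl hw.ne')).const_mul p).sub
    ((hasDerivAt_rpow_const (p := p) (Or.inl hw.ne')).const_mul (p - 1))
  refine hd.congr_deriv ?_
  simp only [rpow_sub hw, rpow_one, rpow_two]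
  field_simp

theorem continuousOn_H : ContinuousOn (H p) (Ioi 0) :=
  fun _ hw => (hasDerivAt_H hw).continuousAt.continuousWithinAt

theorem H_strictAntiOn (hp : 1 < p) : StrictAntiOn (H p) (Ici 1) := by
  refine strictAntiOn_of_deriv_neg (convex_Ici 1)
    (continuousOn_H.mono (Ici_subset_Ioi.mpr one_pos)) ?_
  intro w hw
  rw [interior_Ici, mem_Ioi] at hw
  rw [(hasDerivAt_H (by linarith)).deriv]
  have : 0 < p * (p - 1) * w ^ (p - 2) := by
    have := rpow_pos_of_pos (by linarith : (0 : ℝ) < w) (p - 2)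
    have : 0 < p - 1 := by linarith
    positivity
  nlinarith

end H

section InverseH

variable {p : ℝ} {ω : ℝ → ℝ}

theorem continuousOn_of_rightInvOn_H (hp : 1 < p)
    (hmaps : MapsTo ω (Icc 0 1) (Icc 1 (p / (p - 1)))) (hinv : RightInvOn ω (H p) (Icc 0 1)) :
    ContinuousOn ω (Icc 0 1) :=
  isCompact_Icc.continuousOn_of_rightInvOn
    (continuousOn_H.mono (Icc_subset_Ici_self.trans (Ici_subset_Ioi.mpr one_pos)))
    ((H_strictAntiOn hp).injOn.mono Icc_subset_Ici_self) hmaps hinv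

theorem one_lt_of_rightInvOn_H (hmaps : MapsTo ω (Icc 0 1) (Icc 1 (p / (p - 1))))
    (hinv : RightInvOn ω (H p) (Icc 0 1)) {s : ℝ} (hs : s ∈ Ico 0 1) : 1 < ω s := by
  have hsI : s ∈ Icc 0 1 := Ico_subset_Icc_self hs
  refine (hmaps hsI).1.lt_of_ne fun h => hs.2.ne ?_
  rw [← hinv hsI, ← h, H_one]

theorem hasDerivAt_of_rightInvOn_H (hp : 1 < p)
    (hmaps : MapsTo ω (Icc 0 1) (Icc 1 (p / (p - 1)))) (hinv : RightInvOn ω (H p) (Icc 0 1))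
    {s : ℝ} (hs : s ∈ Ioo 0 1) :
    HasDerivAt ω (p * (p - 1) * ω s ^ (p - 2) * (1 - ω s))⁻¹ s := by
  have hω1 : 1 < ω s := one_lt_of_rightInvOn_H hmaps hinv (Ioo_subset_Ico_self hs)
  have hω0 : 0 < ω s := by linarith
  have hderiv_ne : p * (p - 1) * ω s ^ (p - 2) * (1 - ω s) ≠ 0 := by
    have : 0 < p - 1 := by linarith
    have := rpow_pos_of_pos hω0 (p - 2)
    have : 1 - ω s ≠ 0 := by linarith
    positivity
  have hcont : ContinuousAt ω s :=
    (continuousOn_of_rightInvOn_H hp hmaps hinv).continuousAt (Icc_mem_nhds hs.1 hs.2)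
  have hleft : ∀ᶠ y in 𝓝 s, H p (ω y) = y := by
    filter_upwards [Icc_mem_nhds hs.1 hs.2] with y hy using hinv hy
  exact HasDerivAt.of_local_left_inverse hcont (hasDerivAt_H hω0) hderiv_ne hleft

end InverseH

section Kappa

variable {p a F κ : ℝ}

theorem div_rpow_mul_mem_Icc (hp : 1 < p) (ha : 0 < a) (hF : 0 < F)
    (hκ : (a / F) ^ (1 / (p - 1)) ≤ κ) : a / (κ ^ (p - 1) * F) ∈ Icc 0 1 := by
  have hp1 : 0 < p - 1 := by linarith
  have hκ0 : 0 < κ := (rpow_pos_of_pos (div_pos ha hF) _).trans_le hκ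
  have hκF : 0 < κ ^ (p - 1) * F := by positivity
  rw [one_div, rpow_inv_le_iff_of_pos (div_pos ha hF).le hκ0.le hp1, div_le_iff₀ hF] at hκ
  exact ⟨by positivity, (div_le_one hκF).mpr hκ⟩

theorem div_rpow_mul_mem_Ioo (hp : 1 < p) (ha : 0 < a) (hF : 0 < F)
    (hκ : (a / F) ^ (1 / (p - 1)) < κ) : a / (κ ^ (p - 1) * F) ∈ Ioo 0 1 := by
  have hp1 : 0 < p - 1 := by linarith
  have hκ0 : 0 < κ := (rpow_pos_of_pos (div_pos ha hF) _).trans hκ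
  have hκF : 0 < κ ^ (p - 1) * F := by positivity
  rw [one_div, rpow_inv_lt_iff_of_pos (div_pos ha hF).le hκ0.le hp1, div_lt_iff₀ hF] at hκ
  exact ⟨by positivity, (div_lt_one hκF).mpr hκ⟩

theorem hasDerivAt_div_rpow_mul (hF : F ≠ 0) (hκ : 0 < κ) :
    HasDerivAt (fun κ => a / (κ ^ (p - 1) * F))
      (-(p - 1) * (a / (κ ^ (p - 1) * F)) / κ) κ := by
  have hd := (hasDerivAt_const κ a).div
    ((hasDerivAt_rpow_const (p := p - 1) (Or.inl hκ.ne')).mul_const F)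
    (mul_ne_zero (rpow_pos_of_pos hκ _).ne' hF)
  refine hd.congr_deriv ?_
  simp only [rpow_sub hκ, rpow_one]
  field_simp
  ring

end Kappa

theorem rpow_mul_H_deriv_eq {p q κ w : ℝ} (hp : p ≠ 0) (hp1 : p - 1 ≠ 0) (hκ : 0 < κ)
    (hw : 0 < w) (hw1 : w ≠ 1) :
    (q - 1) * κ ^ (q - 1 - 1) * H q w + κ ^ (q - 1) * (q * (q - 1) * w ^ (q - 2) * (1 - w) *
      ((p * (p - 1) * w ^ (p - 2) * (1 - w))⁻¹ * (-(p - 1) * H p w / κ))) =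
    (q - 1) * (p - q) / p * κ ^ (q - 2) * w ^ q := by
  have : 1 - w ≠ 0 := sub_ne_zero.mpr hw1.symm
  unfold H
  simp only [rpow_sub hκ, rpow_sub hw, rpow_one, rpow_two]
  field_simp
  ring

theorem hasDerivAt_rpow_mul_H_comp {p q a F κ : ℝ} {ω : ℝ → ℝ} (hp : 1 < p)
    (hmaps : MapsTo ω (Icc 0 1) (Icc 1 (p / (p - 1)))) (hinv : RightInvOn ω (H p) (Icc 0 1))
    (hF : F ≠ 0) (hκ : 0 < κ) (hs : a / (κ ^ (p - 1) * F) ∈ Ioo 0 1) :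
    HasDerivAt (fun κ => κ ^ (q - 1) * H q (ω (a / (κ ^ (p - 1) * F))))
      ((q - 1) * (p - q) / p * κ ^ (q - 2) * ω (a / (κ ^ (p - 1) * F)) ^ q) κ := by
  have hw1 := one_lt_of_rightInvOn_H hmaps hinv (Ioo_subset_Ico_self hs)
  have hw : 0 < ω (a / (κ ^ (p - 1) * F)) := by linarith
  have hd := (hasDerivAt_rpow_const (p := q - 1) (Or.inl hκ.ne')).mul
    ((hasDerivAt_H (p := q) hw).comp κ
      ((hasDerivAt_of_rightInvOn_H hp hmaps hinv hs).comp κ (hasDerivAt_div_rpow_mul hF hκ)))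
  have key := rpow_mul_H_deriv_eq (p := p) (q := q) (by linarith) (by linarith) hκ hw hw1.ne'
  rw [hinv (Ioo_subset_Icc_self hs)] at key
  exact hd.congr_deriv key

theorem continuousOn_rpow_mul_H_comp {p q a F : ℝ} {ω : ℝ → ℝ} (hp : 1 < p)
    (hmaps : MapsTo ω (Icc 0 1) (Icc 1 (p / (p - 1)))) (hinv : RightInvOn ω (H p) (Icc 0 1))
    (ha : 0 < a) (hF : 0 < F) :
    ContinuousOn (fun κ => κ ^ (q - 1) * H q (ω (a / (κ ^ (p - 1) * F))))
      (Ici ((a / F) ^ (1 / (p - 1)))) := by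
  have hpos : ∀ κ ∈ Ici ((a / F) ^ (1 / (p - 1))), 0 < κ := fun κ hκ =>
    (rpow_pos_of_pos (div_pos ha hF) _).trans_le hκ
  have hs : ContinuousOn (fun κ => a / (κ ^ (p - 1) * F)) (Ici ((a / F) ^ (1 / (p - 1)))) :=
    continuousOn_const.div ((continuousOn_id.rpow_const fun κ hκ => Or.inl (hpos κ hκ).ne').mul
      continuousOn_const) fun κ hκ => (mul_pos (rpow_pos_of_pos (hpos κ hκ) _) hF).ne'
  have hsmaps :
      MapsTo (fun κ => a / (κ ^ (p - 1) * F)) (Ici ((a / F) ^ (1 / (p - 1)))) (Icc 0 1) :=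
    fun κ hκ => div_rpow_mul_mem_Icc hp ha hF hκ
  have hωs := (continuousOn_of_rightInvOn_H hp hmaps hinv).comp hs hsmaps
  exact (continuousOn_id.rpow_const fun κ hκ => Or.inl (hpos κ hκ).ne').mul
    (continuousOn_H.comp hωs fun _ hκ =>
      mem_Ioi.mpr (zero_lt_one.trans_le (hmaps (hsmaps hκ)).1))

theorem g_strictMono_deriv_general (p q : ℝ) (hq : 1 < q) (hpq : q < p)
    (ωp : ℝ → ℝ)
    (hωp : ∀ s ∈ Icc (0 : ℝ) 1, ωp s ∈ Icc 1 (p / (p - 1)) ∧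
      p * ωp s ^ (p - 1) - (p - 1) * ωp s ^ p = s)
    (f F : ℝ) (hf : 0 < f) (hF : 0 < F) :
    StrictMonoOn
      (fun κ : ℝ => κ ^ (q - 1) *
        (q * ωp (f ^ p / (κ ^ (p - 1) * F)) ^ (q - 1)
          - (q - 1) * ωp (f ^ p / (κ ^ (p - 1) * F)) ^ q))
      (Icc ((f ^ p / F) ^ (1 / (p - 1))) 1) ∧
    ∀ κ ∈ Ioo ((f ^ p / F) ^ (1 / (p - 1))) 1,
      HasDerivAt
        (fun κ : ℝ => κ ^ (q - 1) *
          (q * ωp (f ^ p / (κ ^ (p - 1) * F)) ^ (q - 1)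
            - (q - 1) * ωp (f ^ p / (κ ^ (p - 1) * F)) ^ q))
        (((q - 1) * (p - q) / p) * κ ^ (q - 2) * ωp (f ^ p / (κ ^ (p - 1) * F)) ^ q) κ ∧
      0 < ((q - 1) * (p - q) / p) * κ ^ (q - 2) * ωp (f ^ p / (κ ^ (p - 1) * F)) ^ q := by
  have hp : 1 < p := hq.trans hpq
  have hmaps : MapsTo ωp (Icc 0 1) (Icc 1 (p / (p - 1))) := fun s hs => (hωp s hs).1
  have hinv : RightInvOn ωp (H p) (Icc 0 1) := fun s hs => (hωp s hs).2
  have hfp : 0 < f ^ p := rpow_pos_of_pos hf p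
  have hderiv : ∀ κ ∈ Ioo ((f ^ p / F) ^ (1 / (p - 1))) 1,
      HasDerivAt (fun κ => κ ^ (q - 1) * H q (ωp (f ^ p / (κ ^ (p - 1) * F))))
        (((q - 1) * (p - q) / p) * κ ^ (q - 2) * ωp (f ^ p / (κ ^ (p - 1) * F)) ^ q) κ ∧
      0 < ((q - 1) * (p - q) / p) * κ ^ (q - 2) * ωp (f ^ p / (κ ^ (p - 1) * F)) ^ q := by
    intro κ hκ
    have hκ0 : 0 < κ := (rpow_pos_of_pos (div_pos hfp hF) _).trans hκ.1
    have hs := div_rpow_mul_mem_Ioo hp hfp hF hκ.1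
    have hω : 0 < ωp (f ^ p / (κ ^ (p - 1) * F)) :=
      zero_lt_one.trans (one_lt_of_rightInvOn_H hmaps hinv (Ioo_subset_Ico_self hs))
    refine ⟨hasDerivAt_rpow_mul_H_comp hp hmaps hinv hF.ne' hκ0 hs, ?_⟩
    have : 0 < (q - 1) * (p - q) / p := div_pos (mul_pos (by linarith) (by linarith)) (by linarith)
    positivity
  refine ⟨strictMonoOn_of_deriv_pos (convex_Icc _ _)
    ((continuousOn_rpow_mul_H_comp hp hmaps hinv hfp hF).mono Icc_subset_Ici_self)
    fun κ hκ => ?_, hderiv⟩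
  rw [interior_Icc] at hκ
  exact (hderiv κ hκ).1.deriv ▸ (hderiv κ hκ).2

/-- For `1 < q < p` and `f, A, F > 0` with `f^q < A < f^((p-q)/(p-1)) F^((q-1)/(p-1))`,
the function `g(κ) = κ^(q-1) H_q(ω_p(f^p/(κ^(p-1)F)))` is strictly increasing on
`[(f^p/F)^(1/(p-1)), 1]`, with derivative
`g'(κ) = ((q-1)(p-q)/p) κ^(q-2) ω_p(f^p/(κ^(p-1)F))^q > 0`. -/
theorem g_strictMono_deriv (p q : ℝ) (hq : 1 < q) (hpq : q < p)
    (ωp : ℝ → ℝ)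
    (hωp : ∀ s ∈ Icc (0 : ℝ) 1, ωp s ∈ Icc 1 (p / (p - 1)) ∧
      p * ωp s ^ (p - 1) - (p - 1) * ωp s ^ p = s)
    (f A F : ℝ) (hf : 0 < f) (hA : 0 < A) (hF : 0 < F)
    (h1 : f ^ q < A) (h2 : A < f ^ ((p - q) / (p - 1)) * F ^ ((q - 1) / (p - 1))) :
    StrictMonoOn
      (fun κ : ℝ => κ ^ (q - 1) *
        (q * ωp (f ^ p / (κ ^ (p - 1) * F)) ^ (q - 1)
          - (q - 1) * ωp (f ^ p / (κ ^ (p - 1) * F)) ^ q))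
      (Icc ((f ^ p / F) ^ (1 / (p - 1))) 1) ∧
    ∀ κ ∈ Ioo ((f ^ p / F) ^ (1 / (p - 1))) 1,
      HasDerivAt
        (fun κ : ℝ => κ ^ (q - 1) *
          (q * ωp (f ^ p / (κ ^ (p - 1) * F)) ^ (q - 1)
            - (q - 1) * ωp (f ^ p / (κ ^ (p - 1) * F)) ^ q))
        (((q - 1) * (p - q) / p) * κ ^ (q - 2) * ωp (f ^ p / (κ ^ (p - 1) * F)) ^ q) κ ∧
      0 < ((q - 1) * (p - q) / p) * κ ^ (q - 2) * ωp (f ^ p / (κ ^ (p - 1) * F)) ^ q :=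
  g_strictMono_deriv_general p q hq hpq ωp hωp f F hf hF
end

section
/- For 1<q<p and t>1, the quantity G(t) := (2pq−p)t^q − (q−1)p t^{q+1} − pq t^{q−1} − pt + p is negative, and G(1) = 0. -/
open Real Set

/-- For `1 < q < p`, `G(t) = (2pq-p)t^q - (q-1)p t^(q+1) - pq t^(q-1) - pt + p` is
negative for `t > 1`, and `G(1) = 0`. -/
theorem G_neg_of_one_lt (p q : ℝ) (hq : 1 < q) (hpq : q < p) :
    (∀ t : ℝ, 1 < t →
      (2 * p * q - p) * t ^ q - (q - 1) * p * t ^ (q + 1) - p * q * t ^ (q - 1)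
        - p * t + p < 0) ∧
    (2 * p * q - p) * (1 : ℝ) ^ q - (q - 1) * p * (1 : ℝ) ^ (q + 1)
      - p * q * (1 : ℝ) ^ (q - 1) - p * 1 + p = 0 := by
  have hq1 : (0:ℝ) < q - 1 := by linarith
  have hp0 : (0:ℝ) < p := by linarith
  constructor
  · intro t ht
    have ht0 : (0:ℝ) < t := by linarith
    have hA1 : 1 < t ^ (q - 1) := by
      rw [Real.one_lt_rpow_iff_of_pos ht0]
      exact Or.inl ⟨ht, hq1⟩
    set A := t ^ (q - 1) with hA
    have hB : t ^ q = A * t := by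
      rw [hA, ← Real.rpow_add_one (ne_of_gt ht0)]
      ring_nf
    have hC : t ^ (q + 1) = A * t * t := by
      rw [← hB, ← Real.rpow_add_one (ne_of_gt ht0)]
    -- Bernoulli: with s = A - 1 > 0 and exponent r = q/(q-1) > 1
    have hr : 1 < q / (q - 1) := by
      rw [lt_div_iff₀ hq1]; linarith
    have hbern := one_add_mul_self_lt_rpow_one_add (s := A - 1)
      (by linarith) (by intro h; nlinarith) hr
    have hAB : (1 + (A - 1)) ^ (q / (q - 1)) = t ^ q := by
      have : 1 + (A - 1) = A := by ring
      rw [this, hA, ← Real.rpow_mul (le_of_lt ht0)]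
      congr 1
      field_simp
    rw [hAB, hB] at hbern
    -- so 1 + (q/(q-1)) * (A-1) < A * t
    have hphi : 0 < (q - 1) * (A * t) - q * A + 1 := by
      have h2 : (q - 1) * (1 + q / (q - 1) * (A - 1)) < (q - 1) * (A * t) :=
        (mul_lt_mul_iff_right₀ hq1).mpr hbern
      have h3 : (q - 1) * (1 + q / (q - 1) * (A - 1)) = (q - 1) + q * (A - 1) := by
        field_simp
      nlinarith [h2, h3]
    have key : (2 * p * q - p) * t ^ q - (q - 1) * p * t ^ (q + 1) - p * q * t ^ (q - 1)
        - p * t + p = -(p * (t - 1) * ((q - 1) * (A * t) - q * A + 1)) := by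
      rw [hB, hC]; ring
    rw [key]
    have : 0 < p * (t - 1) * ((q - 1) * (A * t) - q * A + 1) :=
      mul_pos (mul_pos hp0 (by linarith)) hphi
    linarith
  · simp [Real.one_rpow]
    ring
end

section
/- For p>1 and any ℓ ≤ 0, lim_{α→0⁺} α·ω_p(ℓ/α)^p = −ℓ/(p−1), where ω_p is the inverse of H_p(z) = p z^{p−1} − (p−1)z^p extended to (−∞,1] (so ω_p : (−∞,1] → [1,∞) with H_p(ω_p(s)) = s). -/
open Real Filter Topology

/-!
Writing `z = ω_p(s)`, one has `s = H_p(z) = z^p (p/z + (1 - p))`. Since `p z^(p-1) ≥ 0`, also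
`(p - 1) z^p ≥ -s`, so `ω_p(s) → ∞` as `s → -∞`; hence `ω_p(s)^p / s = (p/z + (1 - p))⁻¹ → (1 - p)⁻¹`.
For `ℓ < 0` the theorem follows from `α ω_p(ℓ/α)^p = ℓ · ω_p(s)^p / s` with `s = ℓ/α → -∞`;
for `ℓ = 0` the left side is `α ω_p(0)^p → 0`.
-/

lemma mul_rpow_sub_one_sub_mul_rpow {z : ℝ} (hz : 0 < z) (p : ℝ) :
    p * z ^ (p - 1) - (p - 1) * z ^ p = z ^ p * (p / z + (1 - p)) := by
  rw [rpow_sub_one hz.ne']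
  field_simp
  ring

lemma tendsto_atTop_of_tendsto_rpow_atTop {ι : Type*} {l : Filter ι} {f : ι → ℝ} {p : ℝ}
    (hp : 0 < p) (hf : ∀ᶠ x in l, 0 ≤ f x) (h : Tendsto (fun x => f x ^ p) l atTop) :
    Tendsto f l atTop := by
  refine ((tendsto_rpow_atTop (one_div_pos.mpr hp)).comp h).congr' ?_
  filter_upwards [hf] with x hx
  rw [Function.comp_apply, ← rpow_mul hx, mul_one_div_cancel hp.ne', rpow_one]

section InverseOfH

variable {p : ℝ} {ω : ℝ → ℝ}

lemma tendsto_atBot_atTop_of_inverse (hp : 1 < p)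
    (hω : ∀ s ≤ (1 : ℝ), 1 ≤ ω s ∧ p * ω s ^ (p - 1) - (p - 1) * ω s ^ p = s) :
    Tendsto ω atBot atTop := by
  have hp1 : 0 < p - 1 := sub_pos.mpr hp
  refine tendsto_atTop_of_tendsto_rpow_atTop (by linarith) ?_ ?_
  · filter_upwards [eventually_le_atBot 1] with s hs
    exact zero_le_one.trans (hω s hs).1
  · refine tendsto_atTop_mono' _ ?_ (tendsto_neg_atBot_atTop.atTop_div_const hp1)
    filter_upwards [eventually_le_atBot 1] with s hs
    obtain ⟨hz1, hH⟩ := hω s hs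
    have hnonneg : 0 ≤ p * ω s ^ (p - 1) := by positivity
    rw [div_le_iff₀ hp1]
    linarith

lemma tendsto_rpow_div_atBot_of_inverse (hp : 1 < p)
    (hω : ∀ s ≤ (1 : ℝ), 1 ≤ ω s ∧ p * ω s ^ (p - 1) - (p - 1) * ω s ^ p = s) :
    Tendsto (fun s => ω s ^ p / s) atBot (𝓝 (1 - p)⁻¹) := by
  have hlim : Tendsto (fun s => (p / ω s + (1 - p))⁻¹) atBot (𝓝 (0 + (1 - p))⁻¹) :=
    ((tendsto_const_nhds.div_atTop (tendsto_atBot_atTop_of_inverse hp hω)).add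
      tendsto_const_nhds).inv₀ (by rw [zero_add]; linarith)
  rw [zero_add] at hlim
  refine hlim.congr' ?_
  filter_upwards [eventually_le_atBot 1] with s hs
  obtain ⟨hz1, hH⟩ := hω s hs
  have hz : 0 < ω s := zero_lt_one.trans_le hz1
  rw [mul_rpow_sub_one_sub_mul_rpow hz] at hH
  calc (p / ω s + (1 - p))⁻¹ = ω s ^ p / (ω s ^ p * (p / ω s + (1 - p))) := by
        rw [div_mul_eq_div_div, div_self (rpow_pos_of_pos hz p).ne', one_div]
    _ = ω s ^ p / s := by rw [hH]

end InverseOfH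

/-- For `p > 1` and `ℓ ≤ 0`, `lim_{α→0⁺} α · ω_p(ℓ/α)^p = -ℓ/(p-1)`, where `ω_p` is
the inverse of `H_p(z) = p z^(p-1) - (p-1) z^p` extended to `(-∞, 1]`. -/
theorem limit_alpha_omega_pow (p : ℝ) (hp : 1 < p) (ωp : ℝ → ℝ)
    (hωp : ∀ s ≤ (1 : ℝ), 1 ≤ ωp s ∧ p * ωp s ^ (p - 1) - (p - 1) * ωp s ^ p = s)
    (ℓ : ℝ) (hℓ : ℓ ≤ 0) :
    Tendsto (fun α : ℝ => α * ωp (ℓ / α) ^ p) (𝓝[>] 0) (𝓝 (-ℓ / (p - 1))) := by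
  rcases hℓ.eq_or_lt with rfl | hneg
  · simpa using ((tendsto_id (x := 𝓝 (0 : ℝ))).mul_const (ωp 0 ^ p)).mono_left
      (nhdsWithin_le_nhds (s := Set.Ioi 0))
  · have hs : Tendsto (fun α : ℝ => ℓ / α) (𝓝[>] 0) atBot := by
      simpa only [div_eq_mul_inv] using tendsto_inv_nhdsGT_zero.const_mul_atTop_of_neg hneg
    have hlim := ((tendsto_rpow_div_atBot_of_inverse hp hωp).comp hs).const_mul ℓ
    have hval : ℓ * (1 - p)⁻¹ = -ℓ / (p - 1) := by
      rw [← neg_sub p 1, inv_neg, mul_neg, ← neg_mul, div_eq_mul_inv]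
    rw [hval] at hlim
    refine hlim.congr' ?_
    filter_upwards [self_mem_nhdsWithin] with α (hα : 0 < α)
    have hℓ0 : ℓ ≠ 0 := hneg.ne
    simp only [Function.comp_apply]
    field_simp
end

section
/- For 1<q<p, the function ϑ(s₁) = ω_p(s₁)^p − (p/(p−q)) ω_p(s₁)^{p−q} − s₁ + (p/(p−q)) s₁^{(p−q)/(p−1)} is strictly concave on (0,1). -/
/-! Write `ϑ = F ∘ ω_p + (p/(p-q)) s^((p-q)/(p-1)) - s` with `F z = z^p - (p/(p-q)) z^(p-q)`;
the last two terms are strictly concave. As `H_p ∘ ω_p = id` and `ω_p` is decreasing, Cauchy's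
mean value theorem writes every chord slope of `F ∘ ω_p` as `F'(ξ) / H_p'(ξ)` at a point `ξ`
between the corresponding values of `ω_p`. This ratio is `(σ(ξ) - 1)/(p - 1)`, where `σ(z)` is
the slope of the convex function `z^(1-q)` between `1` and `z`, so it increases with `ξ`; hence
the chord slopes of `F ∘ ω_p` decrease. -/

open Real Set

lemma StrictConcaveOn.const_mul {s : Set ℝ} {f : ℝ → ℝ} {c : ℝ} (hc : 0 < c)
    (hf : StrictConcaveOn ℝ s f) : StrictConcaveOn ℝ s fun x => c * f x := by
  refine ⟨hf.1, fun x hx y hy hxy a b ha hb hab => ?_⟩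
  have h := mul_lt_mul_of_pos_left (hf.2 hx hy hxy ha hb hab) hc
  simp only [smul_eq_mul] at h ⊢
  linarith

lemma convexOn_rpow_of_nonpos {r : ℝ} (hr : r ≤ 0) : ConvexOn ℝ (Ioi 0) fun x : ℝ => x ^ r := by
  refine convexOn_of_hasDerivWithinAt2_nonneg (convex_Ioi 0)
    (f' := fun x => r * x ^ (r - 1)) (f'' := fun x => r * ((r - 1) * x ^ (r - 1 - 1)))
    (fun x hx => (continuousAt_rpow_const x r (Or.inl hx.ne')).continuousWithinAt)
    (fun x hx => ?_) (fun x hx => ?_) (fun x hx => ?_) <;> rw [interior_Ioi] at hx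
  · exact (hasDerivAt_rpow_const (Or.inl hx.ne')).hasDerivWithinAt
  · exact ((hasDerivAt_rpow_const (Or.inl hx.ne')).const_mul r).hasDerivWithinAt
  · have := rpow_pos_of_pos hx (r - 1 - 1)
    rw [← mul_assoc]
    exact mul_nonneg (mul_nonneg_of_nonpos_of_nonpos hr (by linarith)) this.le

lemma StrictAntiOn.of_leftInvOn {α β : Type*} [Preorder α] [LinearOrder β] {g : β → α}
    {ω : α → β} {S : Set α} {T : Set β} (hg : StrictAntiOn g T) (hω : MapsTo ω S T)
    (hgω : LeftInvOn g ω S) : StrictAntiOn ω S := by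
  intro s hs t ht hst
  by_contra! h
  have := hg.antitoneOn (hω hs) (hω ht) h
  rw [hgω hs, hgω ht] at this
  exact not_le_of_gt hst this

lemma exists_mem_Ioo_sub_eq_sub_mul {f g f' g' ρ : ℝ → ℝ} {a b : ℝ} (hab : a < b)
    (hf : ∀ x ∈ Icc a b, HasDerivAt f (f' x) x) (hg : ∀ x ∈ Icc a b, HasDerivAt g (g' x) x)
    (hg' : ∀ x ∈ Ioo a b, g' x ≠ 0) (hfg : ∀ x ∈ Ioo a b, f' x = ρ x * g' x) :
    ∃ ξ ∈ Ioo a b, f b - f a = (g b - g a) * ρ ξ := by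
  obtain ⟨ξ, hξ, h⟩ := exists_ratio_hasDerivAt_eq_ratio_slope f f' hab
    (fun x hx => (hf x hx).continuousAt.continuousWithinAt)
    (fun x hx => hf x (Ioo_subset_Icc_self hx)) g g'
    (fun x hx => (hg x hx).continuousAt.continuousWithinAt)
    (fun x hx => hg x (Ioo_subset_Icc_self hx))
  refine ⟨ξ, hξ, mul_right_cancel₀ (hg' ξ hξ) ?_⟩
  rw [hfg ξ hξ] at h
  linear_combination -h

theorem concaveOn_comp_of_leftInvOn {f g f' g' ρ ω : ℝ → ℝ} {S I : Set ℝ} (hS : Convex ℝ S)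
    (hI : I.OrdConnected) (hω : StrictAntiOn ω S) (hωI : MapsTo ω S I) (hgω : LeftInvOn g ω S)
    (hf : ∀ z ∈ I, HasDerivAt f (f' z) z) (hg : ∀ z ∈ I, HasDerivAt g (g' z) z)
    (hg' : ∀ z ∈ I, g' z ≠ 0) (hfg : ∀ z ∈ I, f' z = ρ z * g' z) (hρ : MonotoneOn ρ I) :
    ConcaveOn ℝ S (f ∘ ω) := by
  have slope_eq : ∀ {s t}, s ∈ S → t ∈ S → s < t →
      ∃ ξ ∈ Icc (ω t) (ω s), (f (ω t) - f (ω s)) / (t - s) = ρ ξ := by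
    intro s t hs ht hst
    have hsub : Icc (ω t) (ω s) ⊆ I := hI.out (hωI ht) (hωI hs)
    obtain ⟨ξ, hξ, h⟩ := exists_mem_Ioo_sub_eq_sub_mul (hω hs ht hst)
      (fun z hz => hf z (hsub hz)) (fun z hz => hg z (hsub hz))
      (fun z hz => hg' z (hsub (Ioo_subset_Icc_self hz)))
      (fun z hz => hfg z (hsub (Ioo_subset_Icc_self hz)))
    rw [hgω hs, hgω ht] at h
    refine ⟨ξ, Ioo_subset_Icc_self hξ, ?_⟩
    rw [div_eq_iff (sub_pos.2 hst).ne']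
    linear_combination -h
  rw [concaveOn_iff_slope_anti_adjacent]
  refine ⟨hS, fun x y z hx hz hxy hyz => ?_⟩
  have hy : y ∈ S := hS.ordConnected.out hx hz ⟨hxy.le, hyz.le⟩
  obtain ⟨ξ₁, hξ₁, h₁⟩ := slope_eq hx hy hxy
  obtain ⟨ξ₂, hξ₂, h₂⟩ := slope_eq hy hz hyz
  simp only [Function.comp_apply]
  rw [h₁, h₂]
  exact hρ (hI.out (hωI hz) (hωI hy) hξ₂) (hI.out (hωI hy) (hωI hx) hξ₁) (hξ₂.2.trans hξ₁.1)

namespace Theta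

noncomputable def H (p z : ℝ) : ℝ := p * z ^ (p - 1) - (p - 1) * z ^ p

noncomputable def F (p q z : ℝ) : ℝ := z ^ p - p / (p - q) * z ^ (p - q)

noncomputable def derivRatio (p q z : ℝ) : ℝ :=
  (slope (fun x : ℝ => x ^ (1 - q)) 1 z - 1) / (p - 1)

variable {p q z : ℝ}

lemma hasDerivAt_H (p : ℝ) (hz : 0 < z) :
    HasDerivAt (H p) (p * (p - 1) * (z ^ (p - 2) - z ^ (p - 1))) z := by
  refine (((hasDerivAt_rpow_const (Or.inl hz.ne')).const_mul p).sub
    ((hasDerivAt_rpow_const (Or.inl hz.ne')).const_mul (p - 1))).congr_deriv ?_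
  rw [show p - 1 - 1 = p - 2 by ring]
  ring

lemma hasDerivAt_F (hpq : p ≠ q) (hz : 0 < z) :
    HasDerivAt (F p q) (p * (z ^ (p - 1) - z ^ (p - q - 1))) z := by
  refine ((hasDerivAt_rpow_const (Or.inl hz.ne')).sub
    ((hasDerivAt_rpow_const (Or.inl hz.ne')).const_mul (p / (p - q)))).congr_deriv ?_
  field_simp [sub_ne_zero.2 hpq]

lemma deriv_H_neg (hp : 1 < p) (hz : 1 < z) : p * (p - 1) * (z ^ (p - 2) - z ^ (p - 1)) < 0 :=
  mul_neg_of_pos_of_neg (by nlinarith) (sub_neg.2 (rpow_lt_rpow_of_exponent_lt hz (by linarith)))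

lemma strictAntiOn_H (hp : 1 < p) : StrictAntiOn (H p) (Ici 1) := by
  refine strictAntiOn_of_hasDerivWithinAt_neg (convex_Ici 1)
    (f' := fun z => p * (p - 1) * (z ^ (p - 2) - z ^ (p - 1)))
    (fun z hz => (hasDerivAt_H p (zero_lt_one.trans_le hz)).continuousAt.continuousWithinAt)
    (fun z hz => ?_) (fun z hz => ?_) <;> rw [interior_Ici] at hz
  · exact (hasDerivAt_H p (zero_lt_one.trans hz)).hasDerivWithinAt
  · exact deriv_H_neg hp hz

lemma deriv_F_eq_derivRatio_mul (hp : p ≠ 1) (hz : 1 < z) :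
    p * (z ^ (p - 1) - z ^ (p - q - 1)) =
      derivRatio p q z * (p * (p - 1) * (z ^ (p - 2) - z ^ (p - 1))) := by
  have hz0 : 0 < z := zero_lt_one.trans hz
  have h₁ : z ^ (p - 1) = z ^ (p - 2) * z := by
    rw [← rpow_add_one hz0.ne']; ring_nf
  have h₂ : z ^ (p - q - 1) = z ^ (p - 2) * z ^ (1 - q) := by
    rw [← rpow_add hz0]; ring_nf
  rw [derivRatio, slope_def_field, one_rpow, h₁, h₂]
  field_simp [sub_ne_zero.2 hp, (sub_pos.2 hz).ne']
  ring

lemma monotoneOn_derivRatio (hq : 1 ≤ q) (hp : 1 ≤ p) : MonotoneOn (derivRatio p q) (Ioi 1) := by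
  have hslope := ((convexOn_rpow_of_nonpos (r := 1 - q) (by linarith)).slope_mono
    (mem_Ioi.2 zero_lt_one)).mono fun z (hz : 1 < z) => ⟨zero_lt_one.trans hz, hz.ne'⟩
  exact fun a ha b hb hab =>
    div_le_div_of_nonneg_right (sub_le_sub_right (hslope ha hb hab) 1) (sub_nonneg.2 hp)

end Theta

/-- For `1 < q < p`, the function
`ϑ(s₁) = ω_p(s₁)^p - (p/(p-q)) ω_p(s₁)^(p-q) - s₁ + (p/(p-q)) s₁^((p-q)/(p-1))`
is strictly concave on `(0,1)`. -/
theorem theta_strictConcave (p q : ℝ) (hq : 1 < q) (hpq : q < p)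
    (ωp : ℝ → ℝ)
    (hωp : ∀ s ∈ Icc (0 : ℝ) 1, ωp s ∈ Icc 1 (p / (p - 1)) ∧
      p * ωp s ^ (p - 1) - (p - 1) * ωp s ^ p = s) :
    StrictConcaveOn ℝ (Ioo 0 1)
      (fun s₁ : ℝ => ωp s₁ ^ p - (p / (p - q)) * ωp s₁ ^ (p - q)
        - s₁ + (p / (p - q)) * s₁ ^ ((p - q) / (p - 1))) := by
  have hp : 1 < p := hq.trans hpq
  have h1 : (1 : ℝ) ∈ Icc 0 1 := right_mem_Icc.2 zero_le_one
  have hω : StrictAntiOn ωp (Icc 0 1) :=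
    (Theta.strictAntiOn_H hp).of_leftInvOn (fun s hs => (hωp s hs).1.1) fun s hs => (hωp s hs).2
  have hωI : MapsTo ωp (Ioo 0 1) (Ioi 1) := fun s hs =>
    (hωp 1 h1).1.1.trans_lt (hω (Ioo_subset_Icc_self hs) h1 hs.2)
  have hFω : ConcaveOn ℝ (Ioo 0 1) (Theta.F p q ∘ ωp) :=
    concaveOn_comp_of_leftInvOn (convex_Ioo 0 1) ordConnected_Ioi (hω.mono Ioo_subset_Icc_self)
      hωI (fun s hs => (hωp s (Ioo_subset_Icc_self hs)).2)
      (fun z hz => Theta.hasDerivAt_F hpq.ne' (zero_lt_one.trans hz))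
      (fun z hz => Theta.hasDerivAt_H p (zero_lt_one.trans hz))
      (fun z hz => (Theta.deriv_H_neg hp hz).ne)
      (fun z hz => Theta.deriv_F_eq_derivRatio_mul hp.ne' hz)
      (Theta.monotoneOn_derivRatio hq.le hp.le)
  have hpow : StrictConcaveOn ℝ (Ioo 0 1) fun s => p / (p - q) * s ^ ((p - q) / (p - 1)) :=
    ((strictConcaveOn_rpow (div_pos (by linarith) (by linarith))
      ((div_lt_one (by linarith)).2 (by linarith))).subset (fun x hx => mem_Ici.2 hx.1.le)
      (convex_Ioo 0 1)).const_mul (div_pos (by linarith) (by linarith))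
  refine ((hpow.sub_convexOn (convexOn_id (convex_Ioo 0 1))).add_concaveOn hFω).congr
    fun s _ => ?_
  simp only [Pi.add_apply, Pi.sub_apply, Function.comp_apply, Theta.F, id]
  ring
end

section
/- For 1<q<p, with ϑ(s₁) = ω_p(s₁)^p − (p/(p−q)) ω_p(s₁)^{p−q} − s₁ + (p/(p−q)) s₁^{(p−q)/(p−1)}, one has ϑ(0⁺) = (p/(p−1))^{p−q}[(p/(p−1))^q − p/(p−q)] < 0, ϑ(1) = 0, and the left derivative ϑ'(1⁻) = (p−q)/(p−1) − 1 < 0. Consequently there is a unique δ ∈ (0,1) with ϑ(δ) = 0, ϑ < 0 on (0,δ) and ϑ > 0 on (δ,1). -/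
open Real Set Filter Topology

private lemma Hderiv {p z : ℝ} (hz : 0 < z) :
    HasDerivAt (fun z : ℝ => p * z ^ (p - 1) - (p - 1) * z ^ p)
      (p * (p - 1) * (z ^ (p - 1 - 1) - z ^ (p - 1))) z := by
  have h1 := (Real.hasDerivAt_rpow_const (p := p - 1) (Or.inl hz.ne')).const_mul p
  have h2 := (Real.hasDerivAt_rpow_const (p := p) (Or.inl hz.ne')).const_mul (p - 1)
  refine (h1.sub h2).congr_deriv ?_
  ring

private lemma Hcont {p : ℝ} :
    ContinuousOn (fun z : ℝ => p * z ^ (p - 1) - (p - 1) * z ^ p) (Ici 1) := by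
  intro z hz
  have hz0 : (z : ℝ) ≠ 0 := by have : (1:ℝ) ≤ z := hz; positivity
  exact ContinuousAt.continuousWithinAt
    (((Real.continuousAt_rpow_const z (p-1) (Or.inl hz0)).const_mul p).sub
    ((Real.continuousAt_rpow_const z p (Or.inl hz0)).const_mul (p-1)))

private lemma Hanti {p : ℝ} (hp : 1 < p) :
    StrictAntiOn (fun z : ℝ => p * z ^ (p - 1) - (p - 1) * z ^ p) (Ici 1) := by
  apply strictAntiOn_of_deriv_neg (convex_Ici 1) Hcont
  intro z hz
  rw [interior_Ici] at hz
  have hz1 : (1:ℝ) < z := hz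
  have hz0 : (0:ℝ) < z := by linarith
  rw [(Hderiv hz0).deriv]
  have h := Real.rpow_lt_rpow_of_exponent_lt hz1 (show p - 1 - 1 < p - 1 by linarith)
  have hp0 : 0 < p := by linarith
  have : 0 < p * (p - 1) := by nlinarith
  exact mul_neg_of_pos_of_neg this (by linarith)

private lemma Hone {p : ℝ} : p * (1:ℝ) ^ (p - 1) - (p - 1) * (1:ℝ) ^ p = 1 := by
  simp [Real.one_rpow]

private lemma Hr {p : ℝ} (hp : 1 < p) :
    p * (p / (p - 1)) ^ (p - 1) - (p - 1) * (p / (p - 1)) ^ p = 0 := by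
  have hp1 : (0:ℝ) < p - 1 := by linarith
  have hr0 : 0 < p / (p - 1) := by positivity
  have hponv : (p / (p - 1)) ^ p = (p / (p - 1)) ^ (p - 1) * (p / (p - 1)) := by
    rw [← Real.rpow_add_one hr0.ne' (p-1)]; ring_nf
  rw [hponv]
  field_simp
  ring

section Om
variable {p q : ℝ} {ωp : ℝ → ℝ}

private lemma omega_eq (hp : 1 < p)
    (hωp : ∀ s ∈ Icc (0 : ℝ) 1, ωp s ∈ Icc 1 (p / (p - 1)) ∧
      p * ωp s ^ (p - 1) - (p - 1) * ωp s ^ p = s)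
    {s z : ℝ} (hs : s ∈ Icc (0:ℝ) 1) (hz : z ∈ Ici (1:ℝ))
    (hzval : p * z ^ (p - 1) - (p - 1) * z ^ p = s) : ωp s = z := by
  have h1 := (hωp s hs).1
  exact (Hanti hp).injOn h1.1 hz (by rw [(hωp s hs).2, hzval])

private lemma r_mem (hp : 1 < p) : p / (p - 1) ∈ Ici (1:ℝ) := by
  have hp1 : (0:ℝ) < p - 1 := by linarith
  rw [mem_Ici, le_div_iff₀ hp1]; linarith

private lemma omega_one (hp : 1 < p)
    (hωp : ∀ s ∈ Icc (0 : ℝ) 1, ωp s ∈ Icc 1 (p / (p - 1)) ∧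
      p * ωp s ^ (p - 1) - (p - 1) * ωp s ^ p = s) : ωp 1 = 1 :=
  omega_eq hp hωp (by norm_num) (by norm_num) Hone

private lemma omega_zero (hp : 1 < p)
    (hωp : ∀ s ∈ Icc (0 : ℝ) 1, ωp s ∈ Icc 1 (p / (p - 1)) ∧
      p * ωp s ^ (p - 1) - (p - 1) * ωp s ^ p = s) : ωp 0 = p / (p - 1) :=
  omega_eq hp hωp (by norm_num) (r_mem hp) (Hr hp)

private lemma omega_mem_Ioo (hp : 1 < p)
    (hωp : ∀ s ∈ Icc (0 : ℝ) 1, ωp s ∈ Icc 1 (p / (p - 1)) ∧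
      p * ωp s ^ (p - 1) - (p - 1) * ωp s ^ p = s)
    {s : ℝ} (hs : s ∈ Ioo (0:ℝ) 1) : ωp s ∈ Ioo 1 (p / (p - 1)) := by
  have hs' : s ∈ Icc (0:ℝ) 1 := ⟨hs.1.le, hs.2.le⟩
  obtain ⟨⟨h1, h2⟩, hval⟩ := hωp s hs'
  constructor
  · rcases eq_or_lt_of_le h1 with h | h
    · exfalso; rw [← h] at hval; rw [Hone] at hval; exact hs.2.ne hval.symm
    · exact h
  · rcases eq_or_lt_of_le h2 with h | h
    · exfalso; rw [h] at hval; rw [Hr hp] at hval; exact hs.1.ne hval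
    · exact h

private lemma omega_contOn (hp : 1 < p)
    (hωp : ∀ s ∈ Icc (0 : ℝ) 1, ωp s ∈ Icc 1 (p / (p - 1)) ∧
      p * ωp s ^ (p - 1) - (p - 1) * ωp s ^ p = s) :
    ContinuousOn ωp (Icc 0 1) := by
  have hp1 : (0:ℝ) < p - 1 := by linarith
  set r := p / (p - 1) with hr
  have hr1 : (1:ℝ) ≤ r := r_mem hp
  have hmaps : ∀ z : ℝ, z ∈ Icc 1 r → (p * z ^ (p - 1) - (p - 1) * z ^ p) ∈ Icc (0:ℝ) 1 := by
    intro z hz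
    have hzI : z ∈ Ici (1:ℝ) := hz.1
    constructor
    · rcases eq_or_lt_of_le hz.2 with h | h
      · rw [h, Hr hp]
      · have := Hanti hp hzI (r_mem hp) h
        beta_reduce at this
        rw [Hr hp] at this; exact this.le
    · rcases eq_or_lt_of_le hz.1 with h | h
      · rw [← h, Hone]
      · have := Hanti hp (mem_Ici.2 le_rfl) hzI h
        beta_reduce at this
        rw [Hone] at this; exact this.le
  set F : Icc (1:ℝ) r → Icc (0:ℝ) 1 :=
    fun z => ⟨p * (z:ℝ) ^ (p - 1) - (p - 1) * (z:ℝ) ^ p, hmaps z z.2⟩ with hF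
  have hFinj : Function.Injective F := by
    intro a b hab
    have := congrArg Subtype.val hab
    exact Subtype.ext ((Hanti hp).injOn (a.2.1 : (1:ℝ) ≤ a) (b.2.1 : (1:ℝ) ≤ b) this)
  have hFsurj : Function.Surjective F := by
    intro s
    refine ⟨⟨ωp s, (hωp s s.2).1⟩, Subtype.ext ?_⟩
    exact (hωp s s.2).2
  have hFcont : Continuous F := by
    apply Continuous.subtype_mk
    exact ContinuousOn.comp_continuous Hcont continuous_subtype_val (fun z => z.2.1)
  let e : Icc (1:ℝ) r ≃ Icc (0:ℝ) 1 := Equiv.ofBijective F ⟨hFinj, hFsurj⟩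
  have hecont : Continuous e := hFcont
  let h := hecont.homeoOfEquivCompactToT2
  have key : Set.restrict (Icc (0:ℝ) 1) ωp = Subtype.val ∘ h.symm := by
    funext s
    have : F ⟨ωp s, (hωp s s.2).1⟩ = s := Subtype.ext (hωp s s.2).2
    have : h.symm s = ⟨ωp s, (hωp s s.2).1⟩ := by
      apply h.injective
      simp only [Homeomorph.apply_symm_apply]
      exact this.symm
    simp [this]
    rfl
  rw [continuousOn_iff_continuous_restrict]
  change Continuous (Set.restrict (Icc (0:ℝ) 1) ωp)
  rw [key]
  exact continuous_subtype_val.comp h.symm.continuous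

private lemma omega_tendsto_zero (hp : 1 < p)
    (hωp : ∀ s ∈ Icc (0 : ℝ) 1, ωp s ∈ Icc 1 (p / (p - 1)) ∧
      p * ωp s ^ (p - 1) - (p - 1) * ωp s ^ p = s) :
    Tendsto ωp (𝓝[>] (0:ℝ)) (𝓝 (p / (p - 1))) := by
  have hc : ContinuousWithinAt ωp (Icc 0 1) 0 :=
    (omega_contOn hp hωp).continuousWithinAt (by norm_num)
  have h1 : Tendsto ωp (𝓝[Icc (0:ℝ) 1] 0) (𝓝 (p / (p - 1))) := by
    rw [← omega_zero hp hωp]; exact hc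
  rw [← nhdsWithin_Ioc_eq_nhdsGT (zero_lt_one (α := ℝ))]
  exact h1.mono_left (nhdsWithin_mono _ Ioc_subset_Icc_self)

private lemma omega_tendsto_one (hp : 1 < p)
    (hωp : ∀ s ∈ Icc (0 : ℝ) 1, ωp s ∈ Icc 1 (p / (p - 1)) ∧
      p * ωp s ^ (p - 1) - (p - 1) * ωp s ^ p = s) :
    Tendsto ωp (𝓝[Ioo (0:ℝ) 1] 1) (𝓝[>] (1:ℝ)) := by
  rw [tendsto_nhdsWithin_iff]
  constructor
  · have hc : ContinuousWithinAt ωp (Icc 0 1) 1 :=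
      (omega_contOn hp hωp).continuousWithinAt (by norm_num)
    have h1 := hc.tendsto
    rw [omega_one hp hωp] at h1
    exact h1.mono_left (nhdsWithin_mono _ Ioo_subset_Icc_self)
  · filter_upwards [self_mem_nhdsWithin] with s hs
    exact (omega_mem_Ioo hp hωp hs).1
end Om

private lemma rq_lt {p q : ℝ} (hq : 1 < q) (hpq : q < p) :
    (p / (p - 1)) ^ q < p / (p - q) := by
  have hq0 : (0:ℝ) < q := by linarith
  have hp1 : (0:ℝ) < p - 1 := by linarith
  have hpq0 : (0:ℝ) < p - q := by linarith
  have hp0 : (0:ℝ) < p := by linarith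
  have hr0 : (0:ℝ) < p / (p - 1) := by positivity
  have key := strictConcaveOn_log_Ioi.2 (mem_Ioi.2 hp0) (mem_Ioi.2 hpq0)
    (show p ≠ p - q by intro h; nlinarith)
    (show (0:ℝ) < (q-1)/q from div_pos (by linarith) hq0)
    (show (0:ℝ) < 1/q by positivity)
    (by field_simp; ring)
  rw [smul_eq_mul, smul_eq_mul, smul_eq_mul, smul_eq_mul] at key
  have harg : (q-1)/q * p + 1/q * (p-q) = p - 1 := by field_simp; ring
  rw [harg] at key
  have key2 : (q-1) * Real.log p + Real.log (p-q) < q * Real.log (p-1) := by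
    have h2 := (mul_lt_mul_iff_right₀ hq0).2 key
    have e1 : q * ((q-1)/q * Real.log p + 1/q * Real.log (p-q))
        = (q-1) * Real.log p + Real.log (p-q) := by field_simp
    rw [e1] at h2; linarith
  rw [Real.rpow_def_of_pos hr0, ← Real.exp_log (show (0:ℝ) < p / (p-q) by positivity)]
  apply Real.exp_lt_exp.2
  rw [Real.log_div hp0.ne' hp1.ne', Real.log_div hp0.ne' hpq0.ne']
  nlinarith [key2]

section Main
variable {p q : ℝ} {ωp : ℝ → ℝ}

private lemma tendsto_zero (hq : 1 < q) (hpq : q < p)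
    (hωp0 : Tendsto ωp (𝓝[>] (0:ℝ)) (𝓝 (p / (p - 1)))) :
    Tendsto
      (fun s₁ : ℝ => ωp s₁ ^ p - (p / (p - q)) * ωp s₁ ^ (p - q)
        - s₁ + (p / (p - q)) * s₁ ^ ((p - q) / (p - 1)))
      (𝓝[>] 0)
      (𝓝 ((p / (p - 1)) ^ (p - q) * ((p / (p - 1)) ^ q - p / (p - q)))) := by
  have hp : 1 < p := hq.trans hpq
  have hp1 : (0:ℝ) < p - 1 := by linarith
  have hr0 : (0:ℝ) < p / (p - 1) := by positivity
  have hα : (0:ℝ) < (p - q) / (p - 1) := by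
    apply div_pos <;> linarith
  have h1 : Tendsto (fun s : ℝ => ωp s ^ p) (𝓝[>] (0:ℝ)) (𝓝 ((p/(p-1)) ^ p)) :=
    hωp0.rpow_const (Or.inl hr0.ne')
  have h2 : Tendsto (fun s : ℝ => (p/(p-q)) * ωp s ^ (p - q)) (𝓝[>] (0:ℝ))
      (𝓝 ((p/(p-q)) * (p/(p-1)) ^ (p - q))) :=
    (hωp0.rpow_const (Or.inl hr0.ne')).const_mul _
  have h3 : Tendsto (fun s : ℝ => s) (𝓝[>] (0:ℝ)) (𝓝 0) :=
    tendsto_id.mono_left nhdsWithin_le_nhds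
  have h4 : Tendsto (fun s : ℝ => (p/(p-q)) * s ^ ((p-q)/(p-1))) (𝓝[>] (0:ℝ))
      (𝓝 ((p/(p-q)) * (0:ℝ) ^ ((p-q)/(p-1)))) :=
    (h3.rpow_const (Or.inr hα.le)).const_mul _
  have h := ((h1.sub h2).sub h3).add h4
  convert h using 2
  have e : (p/(p-1)) ^ p = (p/(p-1)) ^ (p-q) * (p/(p-1)) ^ q := by
    rw [← Real.rpow_add hr0]; ring_nf
  rw [Real.zero_rpow hα.ne', e]
  ring

private lemma lhop_core (hq : 1 < q) (hpq : q < p) :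
    Tendsto (fun ω : ℝ =>
        ((ω ^ p - (p/(p-q)) * ω ^ (p-q)) - (1 - p/(p-q))) /
        ((p * ω ^ (p - 1) - (p - 1) * ω ^ p) - 1))
      (𝓝[>] (1:ℝ)) (𝓝 (-q / (p - 1))) := by
  have hp : 1 < p := hq.trans hpq
  have hp1 : (0:ℝ) < p - 1 := by linarith
  have hpq0 : (0:ℝ) < p - q := by linarith
  have hr1 : (1:ℝ) < p / (p - 1) := by
    rw [lt_div_iff₀ hp1]; linarith
  apply HasDerivAt.lhopital_zero_right_on_Ioo (b := p/(p-1))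
    (f' := fun ω : ℝ => p * ω ^ (p-1) - (p/(p-q)) * ((p-q) * ω ^ (p-q-1)))
    (g' := fun ω : ℝ => p * ((p-1) * ω ^ (p-1-1)) - (p-1) * (p * ω ^ (p-1)))
    hr1
  · intro x hx
    have hx0 : x ≠ 0 := by have := hx.1; positivity
    exact ((Real.hasDerivAt_rpow_const (Or.inl hx0)).sub
      ((Real.hasDerivAt_rpow_const (Or.inl hx0)).const_mul (p/(p-q)))).sub_const _
  · intro x hx
    have hx0 : x ≠ 0 := by have := hx.1; positivity
    exact (((Real.hasDerivAt_rpow_const (Or.inl hx0)).const_mul p).sub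
      ((Real.hasDerivAt_rpow_const (Or.inl hx0)).const_mul (p-1))).sub_const _
  · intro x hx
    have hx1 : (1:ℝ) < x := hx.1
    have hlt := Real.rpow_lt_rpow_of_exponent_lt hx1 (show p - 1 - 1 < p - 1 by linarith)
    have hpos : (0:ℝ) < p * (p-1) := by nlinarith
    intro h
    have : p * (p-1) * (x ^ (p-1-1) - x ^ (p-1)) = 0 := by linarith [h]
    nlinarith [this, hlt, hpos]
  · have hc : ContinuousAt (fun ω : ℝ => (ω ^ p - (p/(p-q)) * ω ^ (p-q)) - (1 - p/(p-q))) 1 :=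
      (((Real.continuousAt_rpow_const 1 p (Or.inl one_ne_zero)).sub
        ((Real.continuousAt_rpow_const 1 (p-q) (Or.inl one_ne_zero)).const_mul _))).sub
        continuousAt_const
    have h0 : ((1:ℝ) ^ p - (p/(p-q)) * (1:ℝ) ^ (p-q)) - (1 - p/(p-q)) = 0 := by
      simp [Real.one_rpow]
    have := hc.tendsto.mono_left (nhdsWithin_le_nhds (s := Ioi (1:ℝ)))
    rwa [h0] at this
  · have hc : ContinuousAt (fun ω : ℝ => (p * ω ^ (p-1) - (p-1) * ω ^ p) - 1) 1 :=
      (((Real.continuousAt_rpow_const 1 (p-1) (Or.inl one_ne_zero)).const_mul p).sub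
        ((Real.continuousAt_rpow_const 1 p (Or.inl one_ne_zero)).const_mul (p-1))).sub
        continuousAt_const
    have h0 : (p * (1:ℝ) ^ (p-1) - (p-1) * (1:ℝ) ^ p) - 1 = 0 := by
      simp [Real.one_rpow]
    have := hc.tendsto.mono_left (nhdsWithin_le_nhds (s := Ioi (1:ℝ)))
    rwa [h0] at this
  · have hφ : HasDerivAt (fun ω : ℝ => ω - ω ^ (1-q)) (1 - (1-q) * 1 ^ (1-q-1)) 1 :=
      (hasDerivAt_id 1).sub (Real.hasDerivAt_rpow_const (Or.inl one_ne_zero))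
    have hφ' : HasDerivAt (fun ω : ℝ => ω - ω ^ (1-q)) q 1 := by
      convert hφ using 1; rw [Real.one_rpow]; ring
    have hsl := hasDerivAt_iff_tendsto_slope.1 hφ'
    have hsl' : Tendsto (slope (fun ω : ℝ => ω - ω ^ (1-q)) 1) (𝓝[>] (1:ℝ)) (𝓝 q) :=
      hsl.mono_left (nhdsWithin_mono _ (fun x hx => ne_of_gt hx))
    have hmul : Tendsto (fun ω : ℝ => -(p-1)⁻¹ * slope (fun ω : ℝ => ω - ω ^ (1-q)) 1 ω)
        (𝓝[>] (1:ℝ)) (𝓝 (-(p-1)⁻¹ * q)) := hsl'.const_mul _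
    have heq : -(p-1)⁻¹ * q = -q / (p-1) := by field_simp
    rw [heq] at hmul
    apply hmul.congr'
    filter_upwards [self_mem_nhdsWithin] with ω hω
    have hω1 : (1:ℝ) < ω := hω
    have hω0 : (0:ℝ) < ω := by linarith
    have e1 : ω ^ (p-1) = ω ^ (p-1-1) * ω := by
      rw [← Real.rpow_add_one hω0.ne' (p-1-1)]; ring_nf
    have e2 : ω ^ (p-q-1) = ω ^ (p-1-1) * ω ^ (1-q) := by
      rw [← Real.rpow_add hω0]; ring_nf
    rw [slope_def_field]
    have hω1' : ω - 1 ≠ 0 := sub_ne_zero.2 (ne_of_gt hω1)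
    have hA : (0:ℝ) < ω ^ (p-1-1) := Real.rpow_pos_of_pos hω0 _
    have hAne : ω ^ (p-1-1) ≠ 0 := hA.ne'
    rw [e1, e2, Real.one_rpow]
    have hden : p * ((p-1) * ω ^ (p-1-1)) - (p-1) * (p * (ω ^ (p-1-1) * ω)) ≠ 0 := by
      have heq2 : p * ((p-1) * ω ^ (p-1-1)) - (p-1) * (p * (ω ^ (p-1-1) * ω))
          = -(p * (p-1) * (ω ^ (p-1-1)) * (ω - 1)) := by ring
      rw [heq2]
      have hpp : (0:ℝ) < p * (p-1) := by nlinarith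
      intro hcontra
      have h2 : p * (p-1) * (ω ^ (p-1-1)) * (ω - 1) = 0 := by linarith
      rcases mul_eq_zero.1 h2 with h3 | h3
      · rcases mul_eq_zero.1 h3 with h4 | h4
        · exact hpp.ne' h4
        · exact hAne h4
      · exact hω1' h3
    rw [eq_div_iff hden]
    field_simp
    ring

private lemma theta_deriv_one (hq : 1 < q) (hpq : q < p)
    (hωp : ∀ s ∈ Icc (0 : ℝ) 1, ωp s ∈ Icc 1 (p / (p - 1)) ∧
      p * ωp s ^ (p - 1) - (p - 1) * ωp s ^ p = s)
    (hωt : Tendsto ωp (𝓝[Ioo (0:ℝ) 1] 1) (𝓝[>] (1:ℝ)))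
    (hω1 : ωp 1 = 1) :
    HasDerivWithinAt (fun s₁ : ℝ => ωp s₁ ^ p - (p / (p - q)) * ωp s₁ ^ (p - q)
        - s₁ + (p / (p - q)) * s₁ ^ ((p - q) / (p - 1)))
      ((p - q) / (p - 1) - 1) (Iio 1) 1 := by
  have hp : 1 < p := hq.trans hpq
  have hp1 : (0:ℝ) < p - 1 := by linarith
  have hpq0 : (0:ℝ) < p - q := by linarith
  have hG : HasDerivWithinAt (fun s : ℝ => ωp s ^ p - (p/(p-q)) * ωp s ^ (p-q))
      (-q/(p-1)) (Iio 1) 1 := by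
    rw [hasDerivWithinAt_iff_tendsto_slope,
      diff_singleton_eq_self (by simp : (1:ℝ) ∉ Iio 1),
      ← nhdsWithin_Ioo_eq_nhdsLT (zero_lt_one (α := ℝ))]
    have comp := (lhop_core hq hpq).comp hωt
    apply comp.congr'
    filter_upwards [self_mem_nhdsWithin] with s hs
    have hval := (hωp s ⟨hs.1.le, hs.2.le⟩).2
    simp only [Function.comp_apply, slope_def_field]
    rw [hval, hω1]; simp [Real.one_rpow]
  have hh2 : HasDerivAt (fun s : ℝ => s ^ ((p-q)/(p-1)))
      ((p-q)/(p-1) * (1:ℝ) ^ ((p-q)/(p-1) - 1)) 1 :=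
    Real.hasDerivAt_rpow_const (Or.inl one_ne_zero)
  have h := (hG.sub (hasDerivAt_id 1).hasDerivWithinAt).add
    ((hh2.hasDerivWithinAt).const_mul (p/(p-q)))
  refine h.congr_deriv ?_
  rw [Real.one_rpow]
  field_simp
  ring

private lemma Nneg (hq : 1 < q) {ω : ℝ} (hω : 1 < ω) :
    -1 + q * ω ^ (1-q) + (1-q) * ω ^ (-q) < 0 := by
  have key : StrictAntiOn (fun ω : ℝ => -1 + q * ω ^ (1-q) + (1-q) * ω ^ (-q)) (Ici 1) := by
    apply strictAntiOn_of_deriv_neg (convex_Ici 1)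
    · intro z hz
      have hz0 : z ≠ 0 := by have : (1:ℝ) ≤ z := hz; positivity
      exact (ContinuousAt.add (continuousAt_const.add
        ((Real.continuousAt_rpow_const z (1-q) (Or.inl hz0)).const_mul q))
        ((Real.continuousAt_rpow_const z (-q) (Or.inl hz0)).const_mul (1-q))).continuousWithinAt
    · intro z hz
      rw [interior_Ici] at hz
      have hz1 : (1:ℝ) < z := hz
      have hz0 : (0:ℝ) < z := by linarith
      have hd : HasDerivAt (fun ω : ℝ => -1 + q * ω ^ (1-q) + (1-q) * ω ^ (-q))
          (q * ((1-q) * z ^ (1-q-1)) + (1-q) * ((-q) * z ^ (-q-1))) z := by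
        exact ((((Real.hasDerivAt_rpow_const (Or.inl hz0.ne')).const_mul q)).const_add (-1)).add
          ((Real.hasDerivAt_rpow_const (Or.inl hz0.ne')).const_mul (1-q))
      rw [hd.deriv]
      have hlt : z ^ (-q-1) < z ^ (1-q-1) := Real.rpow_lt_rpow_of_exponent_lt hz1 (by linarith)
      have hql : q * (1-q) < 0 := by nlinarith
      nlinarith [hlt, hql]
  have h0 : (fun ω : ℝ => -1 + q * ω ^ (1-q) + (1-q) * ω ^ (-q)) 1 = 0 := by
    simp [Real.one_rpow]
  have := key (mem_Ici.2 le_rfl) (mem_Ici.2 hω.le) hω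
  rw [h0] at this
  exact this

private lemma k_hasDeriv (hq : 1 < q) {ω : ℝ} (hω : 1 < ω) :
    HasDerivAt (fun ω : ℝ => (ω - ω ^ (1-q)) / (ω - 1))
      ((-1 + q * ω ^ (1-q) + (1-q) * ω ^ (-q)) / (ω - 1) ^ 2) ω := by
  have hω0 : (0:ℝ) < ω := by linarith
  have hune : ω - 1 ≠ 0 := sub_ne_zero.2 (ne_of_gt hω)
  have hu : HasDerivAt (fun ω : ℝ => ω - ω ^ (1-q)) (1 - (1-q) * ω ^ (1-q-1)) ω :=
    (hasDerivAt_id ω).sub (Real.hasDerivAt_rpow_const (Or.inl hω0.ne'))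
  have hv : HasDerivAt (fun ω : ℝ => ω - 1) 1 ω := (hasDerivAt_id ω).sub_const 1
  have := hu.div hv hune
  refine this.congr_deriv ?_
  have e1 : ω ^ (1-q-1) = ω ^ (-q) := by ring_nf
  have e2 : ω ^ (-q) * ω = ω ^ (1-q) := by
    rw [← Real.rpow_add_one hω0.ne' (-q)]; ring_nf
  rw [e1]
  field_simp
  nlinarith [e2, sq_nonneg (ω-1)]

private lemma k_anti (hq : 1 < q) :
    StrictAntiOn (fun ω : ℝ => (ω - ω ^ (1-q)) / (ω - 1)) (Ioi 1) := by
  apply strictAntiOn_of_deriv_neg (convex_Ioi 1)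
  · intro z hz
    exact (k_hasDeriv hq hz).continuousAt.continuousWithinAt
  · intro z hz
    rw [interior_Ioi] at hz
    rw [(k_hasDeriv hq hz).deriv]
    apply div_neg_of_neg_of_pos (Nneg hq hz)
    have : z - 1 ≠ 0 := sub_ne_zero.2 (ne_of_gt hz)
    positivity

private lemma theta_hasDeriv (hq : 1 < q) (hpq : q < p)
    (hωp : ∀ s ∈ Icc (0 : ℝ) 1, ωp s ∈ Icc 1 (p / (p - 1)) ∧
      p * ωp s ^ (p - 1) - (p - 1) * ωp s ^ p = s)
    (hcont : ContinuousOn ωp (Icc 0 1)) {s : ℝ} (hs : s ∈ Ioo (0:ℝ) 1) :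
    HasDerivAt (fun s₁ : ℝ => ωp s₁ ^ p - (p / (p - q)) * ωp s₁ ^ (p - q)
        - s₁ + (p / (p - q)) * s₁ ^ ((p - q) / (p - 1)))
      (-((ωp s - ωp s ^ (1-q)) / (ωp s - 1)) / (p-1) - 1
        + (p/(p-1)) * (p * ωp s ^ (p-1) - (p-1) * ωp s ^ p) ^ ((p-q)/(p-1) - 1)) s := by
  have hp : 1 < p := hq.trans hpq
  have hp1 : (0:ℝ) < p - 1 := by linarith
  have hpq0 : (0:ℝ) < p - q := by linarith
  obtain ⟨hω1, hωr⟩ := omega_mem_Ioo hp hωp hs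
  set ω := ωp s with hωdef
  have hω0 : (0:ℝ) < ω := by linarith
  have hAne : ω ^ (p-1-1) ≠ 0 := (Real.rpow_pos_of_pos hω0 _).ne'
  have e1 : ω ^ (p-1) = ω ^ (p-1-1) * ω := by
    rw [← Real.rpow_add_one hω0.ne' (p-1-1)]; ring_nf
  have e2 : ω ^ (p-q-1) = ω ^ (p-1-1) * ω ^ (1-q) := by
    rw [← Real.rpow_add hω0]; ring_nf
  have hH'ne : p * (p - 1) * (ω ^ (p - 1 - 1) - ω ^ (p - 1)) ≠ 0 := by
    have hlt : ω ^ (p-1-1) < ω ^ (p-1) := Real.rpow_lt_rpow_of_exponent_lt hω1 (by linarith)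
    have hpp : (0:ℝ) < p * (p-1) := by nlinarith
    intro h
    rcases mul_eq_zero.1 h with h3 | h3
    · exact hpp.ne' h3
    · nlinarith [hlt]
  have hωd : HasDerivAt ωp (p * (p - 1) * (ω ^ (p - 1 - 1) - ω ^ (p - 1)))⁻¹ s := by
    apply HasDerivAt.of_local_left_inverse
      (hcont.continuousAt (Icc_mem_nhds hs.1 hs.2)) (Hderiv hω0) hH'ne
    filter_upwards [Ioo_mem_nhds hs.1 hs.2] with y hy
    exact (hωp y ⟨hy.1.le, hy.2.le⟩).2
  have h1 : HasDerivAt (fun s₁ : ℝ => ωp s₁ ^ p)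
      ((p * (p - 1) * (ω ^ (p - 1 - 1) - ω ^ (p - 1)))⁻¹ * p * ω ^ (p-1)) s :=
    hωd.rpow_const (Or.inl hω0.ne')
  have h2 : HasDerivAt (fun s₁ : ℝ => (p/(p-q)) * ωp s₁ ^ (p-q))
      ((p/(p-q)) * ((p * (p - 1) * (ω ^ (p - 1 - 1) - ω ^ (p - 1)))⁻¹ * (p-q) * ω ^ (p-q-1))) s :=
    (hωd.rpow_const (Or.inl hω0.ne')).const_mul _
  have h3 : HasDerivAt (fun s₁ : ℝ => (p/(p-q)) * s₁ ^ ((p-q)/(p-1)))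
      ((p/(p-q)) * ((p-q)/(p-1) * s ^ ((p-q)/(p-1) - 1))) s :=
    (Real.hasDerivAt_rpow_const (Or.inl hs.1.ne')).const_mul _
  have h := ((h1.sub h2).sub (hasDerivAt_id s)).add h3
  have hval : p * ω ^ (p - 1) - (p - 1) * ω ^ p = s := (hωp s ⟨hs.1.le, hs.2.le⟩).2
  refine h.congr_deriv ?_
  rw [← hval]
  have hω1' : ω - 1 ≠ 0 := sub_ne_zero.2 (ne_of_gt hω1)
  rw [e2]
  rw [show ω ^ (p-1) = ω ^ (p-1-1) * ω from e1] at hH'ne ⊢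
  have hω1'' : 1 - ω ≠ 0 := sub_ne_zero.2 (ne_of_lt hω1)
  field_simp
  ring

private lemma theta_concave (hq : 1 < q) (hpq : q < p)
    (hωp : ∀ s ∈ Icc (0 : ℝ) 1, ωp s ∈ Icc 1 (p / (p - 1)) ∧
      p * ωp s ^ (p - 1) - (p - 1) * ωp s ^ p = s)
    (hcont : ContinuousOn ωp (Icc 0 1)) :
    StrictConcaveOn ℝ (Ioo (0:ℝ) 1)
      (fun s₁ : ℝ => ωp s₁ ^ p - (p / (p - q)) * ωp s₁ ^ (p - q)
        - s₁ + (p / (p - q)) * s₁ ^ ((p - q) / (p - 1))) := by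
  have hp : 1 < p := hq.trans hpq
  have hp1 : (0:ℝ) < p - 1 := by linarith
  apply StrictAntiOn.strictConcaveOn_of_deriv (convex_Ioo 0 1)
  · intro s hs
    exact (theta_hasDeriv hq hpq hωp hcont hs).continuousAt.continuousWithinAt
  · rw [interior_Ioo]
    intro s₁ hs1 s₂ hs2 hlt
    rw [(theta_hasDeriv hq hpq hωp hcont hs1).deriv,
        (theta_hasDeriv hq hpq hωp hcont hs2).deriv]
    obtain ⟨hω11, hω1r⟩ := omega_mem_Ioo hp hωp hs1
    obtain ⟨hω21, hω2r⟩ := omega_mem_Ioo hp hωp hs2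
    set ω₁ := ωp s₁
    set ω₂ := ωp s₂
    have hval1 : p * ω₁ ^ (p - 1) - (p - 1) * ω₁ ^ p = s₁ := (hωp s₁ ⟨hs1.1.le, hs1.2.le⟩).2
    have hval2 : p * ω₂ ^ (p - 1) - (p - 1) * ω₂ ^ p = s₂ := (hωp s₂ ⟨hs2.1.le, hs2.2.le⟩).2
    have hωlt : ω₂ < ω₁ := by
      by_contra hcon
      push_neg at hcon
      rcases eq_or_lt_of_le hcon with h | h
      · rw [← hval1, ← hval2, h] at hlt; exact lt_irrefl _ hlt
      · have := Hanti hp (mem_Ici.2 hω11.le) (mem_Ici.2 hω21.le) h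
        beta_reduce at this
        rw [hval1, hval2] at this
        linarith
    have hk := k_anti hq (mem_Ioi.2 hω21) (mem_Ioi.2 hω11) hωlt
    beta_reduce at hk
    rw [hval1, hval2]
    have hα1 : (p-q)/(p-1) - 1 < 0 := by
      rw [sub_neg, div_lt_one hp1]; linarith
    have ht3 : s₂ ^ ((p-q)/(p-1) - 1) < s₁ ^ ((p-q)/(p-1) - 1) :=
      Real.rpow_lt_rpow_of_neg hs1.1 hlt hα1
    have hcpos : (0:ℝ) < p/(p-1) := by
      have : (0:ℝ) < p := by linarith
      positivity
    have h1 : -((ω₂ - ω₂ ^ (1-q)) / (ω₂ - 1)) / (p-1) < -((ω₁ - ω₁ ^ (1-q)) / (ω₁ - 1)) / (p-1) :=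
      (div_lt_div_iff_of_pos_right hp1).2 (neg_lt_neg hk)
    have h2 := mul_lt_mul_of_pos_left ht3 hcpos
    linarith [h1, h2]

end Main

/-- For `1 < q < p`, with
`ϑ(s₁) = ω_p(s₁)^p - (p/(p-q)) ω_p(s₁)^(p-q) - s₁ + (p/(p-q)) s₁^((p-q)/(p-1))`:
`ϑ(0⁺) = (p/(p-1))^(p-q)·[(p/(p-1))^q - p/(p-q)] < 0`, `ϑ(1) = 0`, the left derivative
`ϑ'(1⁻) = (p-q)/(p-1) - 1 < 0`; consequently there is a unique `δ ∈ (0,1)` with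
`ϑ(δ) = 0`, `ϑ < 0` on `(0,δ)` and `ϑ > 0` on `(δ,1)`. -/
theorem theta_sign_change (p q : ℝ) (hq : 1 < q) (hpq : q < p)
    (ωp : ℝ → ℝ)
    (hωp : ∀ s ∈ Icc (0 : ℝ) 1, ωp s ∈ Icc 1 (p / (p - 1)) ∧
      p * ωp s ^ (p - 1) - (p - 1) * ωp s ^ p = s) :
    Tendsto
      (fun s₁ : ℝ => ωp s₁ ^ p - (p / (p - q)) * ωp s₁ ^ (p - q)
        - s₁ + (p / (p - q)) * s₁ ^ ((p - q) / (p - 1)))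
      (𝓝[>] 0)
      (𝓝 ((p / (p - 1)) ^ (p - q) * ((p / (p - 1)) ^ q - p / (p - q)))) ∧
    (p / (p - 1)) ^ (p - q) * ((p / (p - 1)) ^ q - p / (p - q)) < 0 ∧
    ωp 1 ^ p - (p / (p - q)) * ωp 1 ^ (p - q)
      - 1 + (p / (p - q)) * (1 : ℝ) ^ ((p - q) / (p - 1)) = 0 ∧
    HasDerivWithinAt
      (fun s₁ : ℝ => ωp s₁ ^ p - (p / (p - q)) * ωp s₁ ^ (p - q)
        - s₁ + (p / (p - q)) * s₁ ^ ((p - q) / (p - 1)))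
      ((p - q) / (p - 1) - 1) (Iio 1) 1 ∧
    (p - q) / (p - 1) - 1 < 0 ∧
    (∃! δ, δ ∈ Ioo (0 : ℝ) 1 ∧
      ωp δ ^ p - (p / (p - q)) * ωp δ ^ (p - q)
        - δ + (p / (p - q)) * δ ^ ((p - q) / (p - 1)) = 0) ∧
    (∀ δ ∈ Ioo (0 : ℝ) 1,
      ωp δ ^ p - (p / (p - q)) * ωp δ ^ (p - q)
        - δ + (p / (p - q)) * δ ^ ((p - q) / (p - 1)) = 0 →
      (∀ s₁ ∈ Ioo (0 : ℝ) δ,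
        ωp s₁ ^ p - (p / (p - q)) * ωp s₁ ^ (p - q)
          - s₁ + (p / (p - q)) * s₁ ^ ((p - q) / (p - 1)) < 0) ∧
      (∀ s₁ ∈ Ioo δ (1 : ℝ),
        ωp s₁ ^ p - (p / (p - q)) * ωp s₁ ^ (p - q)
          - s₁ + (p / (p - q)) * s₁ ^ ((p - q) / (p - 1)) > 0)) := by
  have hp : 1 < p := hq.trans hpq
  have hp1 : (0:ℝ) < p - 1 := by linarith
  have hpq0 : (0:ℝ) < p - q := by linarith
  have hr0 : (0:ℝ) < p / (p - 1) := by positivity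
  have hcont := omega_contOn hp hωp
  have hω1 := omega_one hp hωp
  obtain ⟨θ, hθdef⟩ : ∃ θ : ℝ → ℝ, θ = fun s₁ : ℝ => ωp s₁ ^ p - (p / (p - q)) * ωp s₁ ^ (p - q)
      - s₁ + (p / (p - q)) * s₁ ^ ((p - q) / (p - 1)) := ⟨_, rfl⟩
  -- part 1
  have hP1 : Tendsto θ (𝓝[>] (0:ℝ))
      (𝓝 ((p / (p - 1)) ^ (p - q) * ((p / (p - 1)) ^ q - p / (p - q)))) := by
    rw [hθdef]; exact tendsto_zero hq hpq (omega_tendsto_zero hp hωp)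
  -- part 2
  have hP2 : (p / (p - 1)) ^ (p - q) * ((p / (p - 1)) ^ q - p / (p - q)) < 0 :=
    mul_neg_of_pos_of_neg (Real.rpow_pos_of_pos hr0 _) (sub_neg.2 (rq_lt hq hpq))
  -- part 3
  have hP3 : θ 1 = 0 := by
    simp only [hθdef, hω1, Real.one_rpow]
    ring
  -- part 4
  have hP4 : HasDerivWithinAt θ ((p - q) / (p - 1) - 1) (Iio 1) 1 := by
    rw [hθdef]; exact theta_deriv_one hq hpq hωp (omega_tendsto_one hp hωp) hω1
  -- part 5
  have hP5 : (p - q) / (p - 1) - 1 < 0 := by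
    rw [sub_neg, div_lt_one hp1]; linarith
  -- concavity
  have hconc : StrictConcaveOn ℝ (Ioo (0:ℝ) 1) θ := by
    rw [hθdef]; exact theta_concave hq hpq hωp hcont
  have hθcont : ContinuousOn θ (Ioo (0:ℝ) 1) := by
    rw [hθdef]
    exact fun s hs =>
      (theta_hasDeriv hq hpq hωp hcont hs).continuousAt.continuousWithinAt
  -- positivity near 1
  have hev1 : ∀ᶠ s in 𝓝[Iio (1:ℝ)] 1, 0 < θ s := by
    have hslope := hasDerivWithinAt_iff_tendsto_slope.1 hP4
    rw [diff_singleton_eq_self (by simp : (1:ℝ) ∉ Iio 1)] at hslope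
    have h2 := hslope.eventually_lt_const
      (show (p - q)/(p-1) - 1 < ((p - q)/(p-1) - 1)/2 by linarith)
    filter_upwards [h2, self_mem_nhdsWithin] with s hs1 hs2
    rw [slope_def_field, hP3] at hs1
    have hsneg : s - 1 < 0 := sub_neg.2 hs2
    have hmul := (div_lt_iff_of_neg hsneg).1 hs1
    have hpos : 0 < ((p - q)/(p-1) - 1)/2 * (s-1) :=
      mul_pos_of_neg_of_neg (by linarith) hsneg
    linarith [hmul, hpos]
  have exists_pos : ∀ x : ℝ, x < 1 → ∃ b, x < b ∧ b < 1 ∧ 0 < θ b := by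
    intro x hx
    have hne : (𝓝[Iio (1:ℝ)] 1).NeBot := nhdsLT_neBot 1
    have hev := (hev1.and (eventually_nhdsWithin_of_eventually_nhds
      (eventually_gt_nhds hx))).and self_mem_nhdsWithin
    obtain ⟨b, ⟨hb1, hb2⟩, hb3⟩ := hev.exists
    exact ⟨b, hb2, hb3, hb1⟩
  -- a root exists
  have hevn : ∀ᶠ s in 𝓝[>] (0:ℝ), θ s < 0 ∧ s ∈ Ioo (0:ℝ) 1 := by
    have h1 := hP1.eventually_lt_const hP2
    have h2 : ∀ᶠ s in 𝓝[>] (0:ℝ), s < 1 :=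
      eventually_nhdsWithin_of_eventually_nhds (eventually_lt_nhds zero_lt_one)
    filter_upwards [h1, h2, self_mem_nhdsWithin] with s hs1 hs2 hs3
    exact ⟨hs1, hs3, hs2⟩
  obtain ⟨a, ha1, ha2⟩ := hevn.exists
  obtain ⟨b, hb1, hb2, hb3⟩ := exists_pos a ha2.2
  have hicc : Icc a b ⊆ Ioo (0:ℝ) 1 := fun x hx => ⟨lt_of_lt_of_le ha2.1 hx.1, lt_of_le_of_lt hx.2 hb2⟩
  have hIVT := intermediate_value_Ioo hb1.le (hθcont.mono hicc)
  obtain ⟨δ, hδab, hδ0⟩ := hIVT (show (0:ℝ) ∈ Ioo (θ a) (θ b) from ⟨ha1, hb3⟩)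
  have hδmem : δ ∈ Ioo (0:ℝ) 1 := ⟨lt_trans ha2.1 hδab.1, lt_trans hδab.2 hb2⟩
  -- strict concavity chord lemma
  have between : ∀ u v w : ℝ, u ∈ Ioo (0:ℝ) 1 → w ∈ Ioo (0:ℝ) 1 → u < v → v < w →
      ((w-v)/(w-u)) * θ u + ((v-u)/(w-u)) * θ w < θ v := by
    intro u v w hu hw h1 h2
    have hwu : (0:ℝ) < w - u := by linarith
    have h3 := hconc.2 hu hw (show u ≠ w by intro h; rw [h] at h1; linarith)
      (show (0:ℝ) < (w-v)/(w-u) from div_pos (by linarith) hwu)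
      (show (0:ℝ) < (v-u)/(w-u) from div_pos (by linarith) hwu) (by field_simp; ring)
    rw [smul_eq_mul, smul_eq_mul, smul_eq_mul, smul_eq_mul] at h3
    have harg : (w-v)/(w-u) * u + (v-u)/(w-u) * w = v := by field_simp; ring
    rwa [harg] at h3
  -- sign lemma
  have hsign : ∀ d ∈ Ioo (0:ℝ) 1, θ d = 0 →
      (∀ s₁ ∈ Ioo (0:ℝ) d, θ s₁ < 0) ∧ (∀ s₁ ∈ Ioo d (1:ℝ), θ s₁ > 0) := by
    intro d hd hd0
    constructor
    · intro s hs
      by_contra hcon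
      push_neg at hcon
      obtain ⟨c, hc1, hc2, hc3⟩ := exists_pos d hd.2
      have hsmem : s ∈ Ioo (0:ℝ) 1 := ⟨hs.1, lt_trans hs.2 hd.2⟩
      have hcmem : c ∈ Ioo (0:ℝ) 1 := ⟨lt_trans hd.1 hc1, hc2⟩
      have hb := between s d c hsmem hcmem hs.2 hc1
      rw [hd0] at hb
      have c1 : (0:ℝ) < (c-d)/(c-s) := div_pos (by linarith) (by linarith [hs.2, hc1])
      have c2 : (0:ℝ) < (d-s)/(c-s) := div_pos (by linarith [hs.2]) (by linarith [hs.2, hc1])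
      nlinarith [mul_nonneg c1.le hcon, mul_pos c2 hc3]
    · intro s hs
      obtain ⟨c, hc1, hc2, hc3⟩ := exists_pos s hs.2
      have hcmem : c ∈ Ioo (0:ℝ) 1 := ⟨lt_trans hd.1 (lt_trans hs.1 hc1), hc2⟩
      have hb := between d s c hd hcmem hs.1 hc1
      rw [hd0] at hb
      have c2 : (0:ℝ) < (s-d)/(c-d) := div_pos (by linarith [hs.1]) (by linarith [hs.1, hc1])
      nlinarith [mul_pos c2 hc3]
  -- uniqueness
  have huniq : ∃! d, d ∈ Ioo (0:ℝ) 1 ∧ θ d = 0 := by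
    refine ⟨δ, ⟨hδmem, hδ0⟩, ?_⟩
    rintro d ⟨hdmem, hd0⟩
    by_contra hne
    rcases lt_or_gt_of_ne hne with h | h
    · have := (hsign δ hδmem hδ0).1 d ⟨hdmem.1, h⟩
      rw [hd0] at this; exact lt_irrefl 0 this
    · have := (hsign δ hδmem hδ0).2 d ⟨h, hdmem.2⟩
      rw [hd0] at this; exact lt_irrefl 0 this
  subst hθdef
  exact ⟨hP1, hP2, hP3, hP4, hP5, huniq, hsign⟩
end

section
/- For 1<q<p, the function G(s₁) = ω_p(s₁)^p − (p/(p−q)) ω_p(s₁)^{p−q} + (q/(p−q)) s₁ is strictly concave on (0,1), satisfies G(1)=0 and G'(1⁻) = q(q−1)/((p−1)(p−q)) > 0; consequently G(s₁) < 0 for all s₁ ∈ (0,1). -/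
/-!
Writing `g(w) = w - w^(1-q)`, the chain rule through `ω = H⁻¹` gives
`G'(s) = q/(p-q) - slope g 1 (ω s) / (p-1)`. Since `1 - q < 0`, `g` is strictly concave, so its
secant slopes from `1` decrease and stay below `g'(1) = q`. As `ω` is decreasing, `G'` is then
decreasing (strict concavity) and bounded below by `q/(p-q) - q/(p-1) = q(q-1)/((p-1)(p-q)) > 0`,
so `G` increases to `G(1) = 0`; the same bound is the limit of `G'` at `1⁻`, since `ω(s) → 1⁺`.
-/

open Real Set Filter Topology

theorem strictConvexOn_rpow_of_neg {r : ℝ} (hr : r < 0) :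
    StrictConvexOn ℝ (Ioi 0) fun x : ℝ ↦ x ^ r := by
  refine StrictMonoOn.strictConvexOn_of_deriv (convex_Ioi 0)
    (fun x hx ↦ (continuousAt_rpow_const x r (Or.inl (ne_of_gt hx))).continuousWithinAt) ?_
  rw [interior_Ioi]
  intro x hx y hy hxy
  simp only [Real.deriv_rpow_const]
  exact mul_lt_mul_of_neg_left (rpow_lt_rpow_of_neg hx hxy (by linarith)) hr

theorem strictConcaveOn_sub_rpow {q : ℝ} (hq : 1 < q) :
    StrictConcaveOn ℝ (Ioi 0) fun w : ℝ ↦ w - w ^ (1 - q) :=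
  (concaveOn_id (convex_Ioi 0)).add_strictConcaveOn
    (strictConvexOn_rpow_of_neg (by linarith)).neg

theorem hasDerivAt_sub_rpow_one (q : ℝ) :
    HasDerivAt (fun w : ℝ ↦ w - w ^ (1 - q)) q 1 := by
  have h := (hasDerivAt_id' (1 : ℝ)).fun_sub
    (Real.hasDerivAt_rpow_const (p := 1 - q) (Or.inl one_ne_zero))
  rwa [one_rpow, mul_one, sub_sub_cancel] at h

namespace StrictAntiOn

variable {H ω : ℝ → ℝ} {a b c d : ℝ}

theorem leftInvOn_of_rightInvOn (hH : StrictAntiOn H (Icc a b)) (ha : H a = d) (hb : H b = c)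
    (hω : ∀ s ∈ Icc c d, ω s ∈ Icc a b ∧ H (ω s) = s) :
    LeftInvOn ω H (Icc a b) := by
  intro w hw
  have hHw : H w ∈ Icc c d := ha ▸ hb ▸ hH.antitoneOn.mapsTo_Icc hw
  exact hH.injOn (hω _ hHw).1 hw (hω _ hHw).2

theorem strictAntiOn_of_rightInvOn (hH : StrictAntiOn H (Icc a b))
    (hω : ∀ s ∈ Icc c d, ω s ∈ Icc a b ∧ H (ω s) = s) :
    StrictAntiOn ω (Icc c d) := by
  intro s hs t ht hst
  by_contra! hle
  have := hH.antitoneOn (hω s hs).1 (hω t ht).1 hle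
  rw [(hω s hs).2, (hω t ht).2] at this
  exact hst.not_ge this

theorem image_eq_of_rightInvOn (hH : StrictAntiOn H (Icc a b)) (ha : H a = d) (hb : H b = c)
    (hω : ∀ s ∈ Icc c d, ω s ∈ Icc a b ∧ H (ω s) = s) :
    ω '' Icc c d = Icc a b :=
  (MapsTo.image_subset fun s hs ↦ (hω s hs).1).antisymm fun w hw ↦
    ⟨H w, ha ▸ hb ▸ hH.antitoneOn.mapsTo_Icc hw, hH.leftInvOn_of_rightInvOn ha hb hω hw⟩

-- `ω` is monotone and its image is an interval, so it cannot jump.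
theorem continuousOn_Ioc_of_rightInvOn (hH : StrictAntiOn H (Icc a b)) (ha : H a = d)
    (hb : H b = c) (hω : ∀ s ∈ Icc c d, ω s ∈ Icc a b ∧ H (ω s) = s) :
    ContinuousOn ω (Ioc c d) := by
  intro s hs
  have hanti := hH.strictAntiOn_of_rightInvOn hω
  have hcd : c < d := hs.1.trans_le hs.2
  have hc : c ∈ Icc c d := left_mem_Icc.2 hcd.le
  have hd : d ∈ Icc c d := right_mem_Icc.2 hcd.le
  have hωd : ω d = a :=
    ha ▸ hH.leftInvOn_of_rightInvOn ha hb hω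
      (left_mem_Icc.2 ((hω d hd).1.1.trans (hω d hd).1.2))
  have hab : a < b := hωd ▸ (hanti hc hd hcd).trans_le (hω c hc).1.2
  have himage : (fun s ↦ -ω s) '' Icc c d = Icc (-b) (-a) := by
    rw [← image_neg_Icc, ← hH.image_eq_of_rightInvOn ha hb hω, image_image]
  rcases hs.2.eq_or_lt with rfl | hsd
  · have := hanti.neg.continuousWithinAt_left_of_image_mem_nhdsWithin (Icc_mem_nhdsLE hs.1)
      (by rw [himage, hωd]; exact Icc_mem_nhdsLE (neg_lt_neg hab))
    simpa using this.fun_neg.mono Ioc_subset_Iic_self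
  · have hs' : s ∈ Icc c d := Ioc_subset_Icc_self hs
    have := hanti.neg.continuousAt_of_image_mem_nhds (Icc_mem_nhds hs.1 hsd) (by
      rw [himage]
      exact Icc_mem_nhds (neg_lt_neg ((hanti hc hs' hs.1).trans_le (hω c hc).1.2))
        (neg_lt_neg (hωd ▸ hanti hs' hd hsd)))
    simpa using this.fun_neg.continuousWithinAt

end StrictAntiOn

noncomputable def Hp (p w : ℝ) : ℝ := p * w ^ (p - 1) - (p - 1) * w ^ p

theorem Hp_one (p : ℝ) : Hp p 1 = 1 := by simp [Hp]

theorem Hp_div_sub_one {p : ℝ} (hp₀ : p ≠ 0) (hp₁ : p - 1 ≠ 0) : Hp p (p / (p - 1)) = 0 := by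
  have h : (p / (p - 1)) ^ p = (p / (p - 1)) ^ (p - 1) * (p / (p - 1)) := by
    rw [← rpow_add_one (div_ne_zero hp₀ hp₁), sub_add_cancel]
  rw [Hp, h]
  field_simp
  ring

theorem hasDerivAt_Hp (p : ℝ) {w : ℝ} (hw : 0 < w) :
    HasDerivAt (Hp p) (p * (p - 1) * w ^ (p - 2) * (1 - w)) w := by
  refine (((Real.hasDerivAt_rpow_const (p := p - 1) (Or.inl hw.ne')).const_mul p).fun_sub
    ((Real.hasDerivAt_rpow_const (p := p) (Or.inl hw.ne')).const_mul (p - 1))).congr_deriv ?_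
  rw [show p - 1 - 1 = p - 2 by ring, show p - 1 = p - 2 + 1 by ring, rpow_add_one hw.ne']
  ring

theorem mul_rpow_mul_one_sub_neg {p w : ℝ} (hp : 1 < p) (hw : 1 < w) :
    p * (p - 1) * w ^ (p - 2) * (1 - w) < 0 := by
  have := rpow_pos_of_pos (one_pos.trans hw) (p - 2)
  have : 0 < p - 1 := by linarith
  exact mul_neg_of_pos_of_neg (by positivity) (by linarith)

theorem strictAntiOn_Hp {p : ℝ} (hp : 1 < p) : StrictAntiOn (Hp p) (Ici 1) := by
  refine strictAntiOn_of_deriv_neg (convex_Ici 1)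
    (fun w hw ↦ (hasDerivAt_Hp p (one_pos.trans_le hw)).continuousAt.continuousWithinAt) ?_
  rw [interior_Ici]
  intro w hw
  rw [(hasDerivAt_Hp p (one_pos.trans hw)).deriv]
  exact mul_rpow_mul_one_sub_neg hp hw

theorem strictAntiOn_Hp_Icc {p : ℝ} (hp : 1 < p) : StrictAntiOn (Hp p) (Icc 1 (p / (p - 1))) :=
  (strictAntiOn_Hp hp).mono Icc_subset_Ici_self

def IsHpInverse (p : ℝ) (ω : ℝ → ℝ) : Prop :=
  ∀ s ∈ Icc (0 : ℝ) 1, ω s ∈ Icc 1 (p / (p - 1)) ∧ Hp p (ω s) = s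

namespace IsHpInverse

variable {p : ℝ} {ω : ℝ → ℝ} {s : ℝ}

theorem apply_one (hω : IsHpInverse p ω) (hp : 1 < p) : ω 1 = 1 := by
  have h := (strictAntiOn_Hp_Icc hp).leftInvOn_of_rightInvOn (Hp_one p)
    (Hp_div_sub_one (by linarith) (by linarith)) hω
    (left_mem_Icc.2 ((one_le_div (by linarith)).2 (by linarith)))
  rwa [Hp_one] at h

theorem strictAntiOn (hω : IsHpInverse p ω) (hp : 1 < p) : StrictAntiOn ω (Icc 0 1) :=
  (strictAntiOn_Hp_Icc hp).strictAntiOn_of_rightInvOn hω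

theorem one_lt_apply (hω : IsHpInverse p ω) (hp : 1 < p) (hs : s ∈ Ico 0 1) : 1 < ω s :=
  hω.apply_one hp ▸
    hω.strictAntiOn hp (Ico_subset_Icc_self hs) (right_mem_Icc.2 zero_le_one) hs.2

theorem continuousOn (hω : IsHpInverse p ω) (hp : 1 < p) : ContinuousOn ω (Ioc 0 1) :=
  (strictAntiOn_Hp_Icc hp).continuousOn_Ioc_of_rightInvOn (Hp_one p)
    (Hp_div_sub_one (by linarith) (by linarith)) hω

theorem hasDerivAt (hω : IsHpInverse p ω) (hp : 1 < p) (hs : s ∈ Ioo 0 1) :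
    HasDerivAt ω (p * (p - 1) * ω s ^ (p - 2) * (1 - ω s))⁻¹ s := by
  have h1 := hω.one_lt_apply hp (Ioo_subset_Ico_self hs)
  refine HasDerivAt.of_local_left_inverse
    ((hω.continuousOn hp).continuousAt (Ioc_mem_nhds hs.1 hs.2)) (hasDerivAt_Hp p (by linarith))
    (mul_rpow_mul_one_sub_neg hp h1).ne ?_
  filter_upwards [Icc_mem_nhds hs.1 hs.2] with t ht using (hω t ht).2

theorem tendsto_nhdsLT_one (hω : IsHpInverse p ω) (hp : 1 < p) :
    Tendsto ω (𝓝[<] 1) (𝓝[>] 1) := by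
  refine tendsto_nhdsWithin_of_tendsto_nhds_of_eventually_within _ ?_ ?_
  · have := ((hω.continuousOn hp) 1 (right_mem_Ioc.2 zero_lt_one)).tendsto
    rw [hω.apply_one hp] at this
    exact this.mono_left (nhdsWithin_le_of_mem (Ioc_mem_nhdsLT zero_lt_one))
  · filter_upwards [Ioo_mem_nhdsLT zero_lt_one] with s hs
    exact hω.one_lt_apply hp (Ioo_subset_Ico_self hs)

end IsHpInverse

theorem slope_sub_rpow_lt_slope {q v w : ℝ} (hq : 1 < q) (hv : 1 < v) (hvw : v < w) :
    slope (fun w : ℝ ↦ w - w ^ (1 - q)) 1 w < slope (fun w : ℝ ↦ w - w ^ (1 - q)) 1 v := by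
  simp only [slope_def_field]
  exact (strictConcaveOn_sub_rpow hq).secant_strict_mono (mem_Ioi.2 one_pos)
    (mem_Ioi.2 (one_pos.trans hv)) (mem_Ioi.2 (one_pos.trans (hv.trans hvw))) hv.ne'
    (hv.trans hvw).ne' hvw

theorem slope_sub_rpow_lt {q w : ℝ} (hq : 1 < q) (hw : 1 < w) :
    slope (fun w : ℝ ↦ w - w ^ (1 - q)) 1 w < q :=
  (strictConcaveOn_sub_rpow hq).slope_lt_of_hasDerivAt (mem_Ioi.2 one_pos)
    (mem_Ioi.2 (one_pos.trans hw)) hw (hasDerivAt_sub_rpow_one q)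

theorem hasDerivAt_rpow_sub_rpow {p q w : ℝ} (hpq : p ≠ q) (hw : 0 < w) :
    HasDerivAt (fun w : ℝ ↦ w ^ p - p / (p - q) * w ^ (p - q))
      (p * w ^ (p - 2) * (w - w ^ (1 - q))) w := by
  refine ((Real.hasDerivAt_rpow_const (p := p) (Or.inl hw.ne')).fun_sub
    ((Real.hasDerivAt_rpow_const (p := p - q) (Or.inl hw.ne')).const_mul _)).congr_deriv ?_
  rw [show p - 1 = p - 2 + 1 by ring, show p - q - 1 = p - 2 + (1 - q) by ring,
    rpow_add_one hw.ne', rpow_add hw]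
  field_simp [sub_ne_zero.2 hpq]

theorem sub_div_eq_mul_sub_one_div {p q : ℝ} (hp : p ≠ 1) (hpq : p ≠ q) :
    q / (p - q) - q / (p - 1) = q * (q - 1) / ((p - 1) * (p - q)) := by
  field_simp [sub_ne_zero.2 hp, sub_ne_zero.2 hpq]
  ring

noncomputable def G (p q : ℝ) (ω : ℝ → ℝ) (s : ℝ) : ℝ :=
  ω s ^ p - p / (p - q) * ω s ^ (p - q) + q / (p - q) * s

namespace IsHpInverse

variable {p q : ℝ} {ω : ℝ → ℝ} {s : ℝ}

theorem G_one (hω : IsHpInverse p ω) (hp : 1 < p) (hpq : p ≠ q) : G p q ω 1 = 0 := by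
  rw [G, hω.apply_one hp, one_rpow, one_rpow]
  field_simp [sub_ne_zero.2 hpq]
  ring

theorem hasDerivAt_G (hω : IsHpInverse p ω) (hp : 1 < p) (hpq : p ≠ q) (hs : s ∈ Ioo 0 1) :
    HasDerivAt (G p q ω)
      (q / (p - q) - slope (fun w : ℝ ↦ w - w ^ (1 - q)) 1 (ω s) / (p - 1)) s := by
  have h1 := hω.one_lt_apply hp (Ioo_subset_Ico_self hs)
  have h := ((hasDerivAt_rpow_sub_rpow hpq (one_pos.trans h1)).comp s (hω.hasDerivAt hp hs)).add
    ((hasDerivAt_id s).const_mul (q / (p - q)))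
  refine h.congr_deriv ?_
  have := rpow_pos_of_pos (one_pos.trans h1) (p - 2)
  rw [slope_def_field, one_rpow]
  field_simp [sub_ne_zero.2 hpq, (by linarith : p - 1 ≠ 0), (by linarith : ω s - 1 ≠ 0),
    (by linarith : 1 - ω s ≠ 0), this.ne', (by linarith : p ≠ 0)]
  ring

theorem continuousOn_G (hω : IsHpInverse p ω) (hp : 1 < p) :
    ContinuousOn (G p q ω) (Ioc 0 1) := by
  have hc := hω.continuousOn hp
  have hω0 : ∀ s ∈ Ioc (0 : ℝ) 1, ω s ≠ 0 := fun s hs ↦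
    (one_pos.trans_le (hω s (Ioc_subset_Icc_self hs)).1.1).ne'
  exact ((hc.rpow_const fun s hs ↦ Or.inl (hω0 s hs)).sub
    (continuousOn_const.mul (hc.rpow_const fun s hs ↦ Or.inl (hω0 s hs)))).add
    (continuousOn_const.mul continuousOn_id)

theorem strictConcaveOn_G (hω : IsHpInverse p ω) (hq : 1 < q) (hpq : q < p) :
    StrictConcaveOn ℝ (Ioo 0 1) (G p q ω) := by
  have hp := hq.trans hpq
  refine StrictAntiOn.strictConcaveOn_of_deriv (convex_Ioo 0 1)
    (fun s hs ↦ (hω.hasDerivAt_G hp hpq.ne' hs).continuousAt.continuousWithinAt) ?_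
  rw [interior_Ioo]
  intro s hs t ht hst
  rw [(hω.hasDerivAt_G hp hpq.ne' hs).deriv, (hω.hasDerivAt_G hp hpq.ne' ht).deriv]
  have hωst : ω t < ω s :=
    hω.strictAntiOn hp (Ioo_subset_Icc_self hs) (Ioo_subset_Icc_self ht) hst
  have := slope_sub_rpow_lt_slope hq (hω.one_lt_apply hp (Ioo_subset_Ico_self ht)) hωst
  gcongr

theorem lt_deriv_G (hω : IsHpInverse p ω) (hq : 1 < q) (hpq : q < p) (hs : s ∈ Ioo 0 1) :
    q * (q - 1) / ((p - 1) * (p - q)) < deriv (G p q ω) s := by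
  have hp := hq.trans hpq
  rw [(hω.hasDerivAt_G hp hpq.ne' hs).deriv, ← sub_div_eq_mul_sub_one_div hp.ne' hpq.ne']
  have := slope_sub_rpow_lt hq (hω.one_lt_apply hp (Ioo_subset_Ico_self hs))
  gcongr

theorem tendsto_deriv_G (hω : IsHpInverse p ω) (hp : 1 < p) (hpq : p ≠ q) :
    Tendsto (deriv (G p q ω)) (𝓝[<] 1) (𝓝 (q * (q - 1) / ((p - 1) * (p - q)))) := by
  have hslope : Tendsto (slope (fun w : ℝ ↦ w - w ^ (1 - q)) 1) (𝓝[>] 1) (𝓝 q) :=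
    (hasDerivAt_iff_tendsto_slope.1 (hasDerivAt_sub_rpow_one q)).mono_left
      (nhdsWithin_mono _ fun w hw ↦ ne_of_gt hw)
  rw [← sub_div_eq_mul_sub_one_div hp.ne' hpq]
  refine (((hslope.comp (hω.tendsto_nhdsLT_one hp)).div_const (p - 1)).const_sub _).congr' ?_
  filter_upwards [Ioo_mem_nhdsLT zero_lt_one] with s hs
  exact (hω.hasDerivAt_G hp hpq hs).deriv.symm

theorem hasDerivWithinAt_G_one (hω : IsHpInverse p ω) (hq : 1 < q) (hpq : q < p) :
    HasDerivWithinAt (G p q ω) (q * (q - 1) / ((p - 1) * (p - q))) (Iio 1) 1 := by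
  have hp := hq.trans hpq
  refine (hasDerivWithinAt_Iic_of_tendsto_deriv
    (fun s hs ↦ (hω.hasDerivAt_G hp hpq.ne' hs).differentiableAt.differentiableWithinAt)
    ((hω.continuousOn_G hp 1 (right_mem_Ioc.2 one_pos)).mono Ioo_subset_Ioc_self)
    (Ioo_mem_nhdsLT zero_lt_one) (hω.tendsto_deriv_G hp hpq.ne')).mono Iio_subset_Iic_self

theorem G_neg (hω : IsHpInverse p ω) (hq : 1 < q) (hpq : q < p) (hs : s ∈ Ioo 0 1) :
    G p q ω s < 0 := by
  have hp := hq.trans hpq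
  have hmono : StrictMonoOn (G p q ω) (Ioc 0 1) := by
    refine strictMonoOn_of_deriv_pos (convex_Ioc 0 1) (hω.continuousOn_G hp) ?_
    rw [interior_Ioc]
    intro t ht
    refine lt_trans ?_ (hω.lt_deriv_G hq hpq ht)
    have : 0 < p - q := by linarith
    have : 0 < p - 1 := by linarith
    have : 0 < q - 1 := by linarith
    positivity
  exact hω.G_one hp hpq.ne' ▸ hmono (Ioo_subset_Ioc_self hs) (right_mem_Ioc.2 one_pos) hs.2

end IsHpInverse

/-- For `1 < q < p`, `G(s₁) = ω_p(s₁)^p - (p/(p-q)) ω_p(s₁)^(p-q) + (q/(p-q)) s₁` is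
strictly concave on `(0,1)`, with `G(1) = 0` and `G'(1⁻) = q(q-1)/((p-1)(p-q)) > 0`;
consequently `G(s₁) < 0` for all `s₁ ∈ (0,1)`. -/
theorem G_concave_neg (p q : ℝ) (hq : 1 < q) (hpq : q < p)
    (ωp : ℝ → ℝ)
    (hωp : ∀ s ∈ Icc (0 : ℝ) 1, ωp s ∈ Icc 1 (p / (p - 1)) ∧
      p * ωp s ^ (p - 1) - (p - 1) * ωp s ^ p = s) :
    StrictConcaveOn ℝ (Ioo 0 1)
      (fun s₁ : ℝ => ωp s₁ ^ p - (p / (p - q)) * ωp s₁ ^ (p - q) + (q / (p - q)) * s₁) ∧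
    ωp 1 ^ p - (p / (p - q)) * ωp 1 ^ (p - q) + (q / (p - q)) * 1 = 0 ∧
    HasDerivWithinAt
      (fun s₁ : ℝ => ωp s₁ ^ p - (p / (p - q)) * ωp s₁ ^ (p - q) + (q / (p - q)) * s₁)
      (q * (q - 1) / ((p - 1) * (p - q))) (Iio 1) 1 ∧
    0 < q * (q - 1) / ((p - 1) * (p - q)) ∧
    ∀ s₁ ∈ Ioo (0 : ℝ) 1,
      ωp s₁ ^ p - (p / (p - q)) * ωp s₁ ^ (p - q) + (q / (p - q)) * s₁ < 0 := by
  have hω : IsHpInverse p ωp := hωp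
  have hp : 1 < p := hq.trans hpq
  refine ⟨hω.strictConcaveOn_G hq hpq, hω.G_one hp hpq.ne', hω.hasDerivWithinAt_G_one hq hpq,
    div_pos (by nlinarith) (mul_pos (by linarith) (by linarith)), fun s hs ↦ hω.G_neg hq hpq hs⟩
end
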